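/- arXiv:1707.02058 — 9 statements merged into one kernel-verified Lean document; each statement's English description precedes it below -/
import Mathlib

section
/- In the m-population game, if Player 1 has a winning strategy, then he has a winning strategy that depends only on the counting abstraction of the configuration, i.e., on the multiset (number of agents in each state) rather than on the tuple of agent positions. -/
variable {Q A : Type}

/-- The NFA transition relation is complete. -/
def Complete (Δ : Q → A → Q → Prop) : Prop := ∀ q a, ∃ p, Δ q a p

/-- σ is a winning strategy for Player 1 in the m-population game:
every play starting in (q0,...,q0), consistent with σ (Player 2 resolves the
nondeterminism per agent), reaches the configuration (f,...,f). -/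
def PopWinningStrat (Δ : Q → A → Q → Prop) (q0 f : Q) (m : ℕ)
    (σ : List ((Fin m → Q) × A) → (Fin m → Q) → A) : Prop :=
  ∀ (ρ : ℕ → (Fin m → Q)) (acts : ℕ → A),
    ρ 0 = (fun _ => q0) →
    (∀ n, acts n = σ (List.ofFn (fun i : Fin n => (ρ i.1, acts i.1))) (ρ n)) →
    (∀ n j, Δ (ρ n j) (acts n) (ρ (n + 1) j)) →
    ∃ n, ∀ j, ρ n j = f

/-- Player 1 wins the m-population game. -/
def PopWins (Δ : Q → A → Q → Prop) (q0 f : Q) (m : ℕ) : Prop :=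
  ∃ σ, PopWinningStrat Δ q0 f m σ

/-- The counting abstraction of a configuration: how many agents are in each state. -/
noncomputable def countAbs {m : ℕ} (v : Fin m → Q) : Q → ℕ := fun q => Nat.card {j : Fin m // v j = q}

/- ### Auxiliary machinery -/

lemma countAbs_comp_perm {m : ℕ} (v : Fin m → Q) (π : Equiv.Perm (Fin m)) :
    countAbs (v ∘ π) = countAbs v := by
  funext q
  exact Nat.card_congr (Equiv.subtypeEquiv π fun j => Iff.rfl)

lemma exists_perm_of_countAbs_eq {m : ℕ} {v w : Fin m → Q}
    (h : countAbs w = countAbs v) : ∃ π : Equiv.Perm (Fin m), w = v ∘ π := by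
  have hg : ∀ q : Q, Nonempty ({j : Fin m // w j = q} ≃ {j : Fin m // v j = q}) := by
    intro q
    rw [← Finite.card_eq]
    exact congrFun h q
  let G : ∀ q, {j : Fin m // w j = q} ≃ {j : Fin m // v j = q} := fun q => (hg q).some
  refine ⟨(Equiv.sigmaFiberEquiv w).symm.trans
    ((Equiv.sigmaCongrRight G).trans (Equiv.sigmaFiberEquiv v)), ?_⟩
  funext j
  exact ((G (w j)) ⟨j, rfl⟩).2.symm

open Classical in
noncomputable def stepFn (Δ : Q → A → Q → Prop) (q0 : Q) {m : ℕ}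
    (cur : Fin m → Q) (a : A) (c : Q → ℕ) : Fin m → Q :=
  if h : ∃ w : Fin m → Q, countAbs w = c ∧ ∀ j, Δ (cur j) a (w j) then h.choose
  else fun _ => q0

/-- The counts of the first configuration of an abstract history, or a default. -/
def headC : List ((Q → ℕ) × A) → (Q → ℕ) → (Q → ℕ)
  | [], c => c
  | (c', _) :: _, _ => c'

/-- Reconstruct a concrete history from an abstract one. -/
noncomputable def recon (Δ : Q → A → Q → Prop) (q0 : Q) {m : ℕ} :
    (Fin m → Q) → List ((Q → ℕ) × A) → (Q → ℕ) → List ((Fin m → Q) × A) × (Fin m → Q)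
  | cur, [], _ => ([], cur)
  | cur, (_, a) :: rest, cfin =>
      let r := recon Δ q0 (stepFn Δ q0 cur a (headC rest cfin)) rest cfin
      ((cur, a) :: r.1, r.2)

/-- The canonical play shadowing a real play `ρ`. -/
noncomputable def playAux (Δ : Q → A → Q → Prop) (q0 : Q) {m : ℕ}
    (acts : ℕ → A) (ρ : ℕ → Fin m → Q) : ℕ → Fin m → Q
  | 0 => fun _ => q0
  | n + 1 => stepFn Δ q0 (playAux Δ q0 acts ρ n) (acts n) (countAbs (ρ (n + 1)))

lemma recon_spec (Δ : Q → A → Q → Prop) (q0 : Q) {m : ℕ}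
    (acts : ℕ → A) (ρ : ℕ → Fin m → Q) :
    ∀ (k t : ℕ),
      recon Δ q0 (playAux Δ q0 acts ρ t)
        (List.ofFn (fun i : Fin k => (countAbs (ρ (t + i.1)), acts (t + i.1))))
        (countAbs (ρ (t + k)))
      = (List.ofFn (fun i : Fin k => (playAux Δ q0 acts ρ (t + i.1), acts (t + i.1))),
         playAux Δ q0 acts ρ (t + k)) := by
  intro k
  induction k with
  | zero => intro t; simp [recon]
  | succ k ih =>
    intro t
    rw [List.ofFn_succ, List.ofFn_succ]
    simp only [Fin.val_zero, Fin.val_succ, Nat.add_zero]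
    have hhead : headC
        (List.ofFn (fun i : Fin k => (countAbs (ρ (t + (i.1 + 1))), acts (t + (i.1 + 1)))))
        (countAbs (ρ (t + (k + 1)))) = countAbs (ρ (t + 1)) := by
      cases k with
      | zero => simp [headC]
      | succ kk => rw [List.ofFn_succ]; simp [headC]
    simp only [recon, hhead]
    have hplay : stepFn Δ q0 (playAux Δ q0 acts ρ t) (acts t) (countAbs (ρ (t + 1)))
        = playAux Δ q0 acts ρ (t + 1) := rfl
    rw [hplay]
    have ih' := ih (t + 1)
    simp only [show ∀ x : ℕ, t + 1 + x = t + (x + 1) from fun x => by omega] at ih'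
    rw [ih']

/-- If Player 1 has a winning strategy in the m-population game, he has one that
depends only on the counting abstraction of the history and current configuration. -/
theorem stmt2 (Δ : Q → A → Q → Prop) (q0 f : Q) (hc : Complete Δ) (m : ℕ)
    (hw : PopWins Δ q0 f m) :
    ∃ σ : List ((Fin m → Q) × A) → (Fin m → Q) → A,
      PopWinningStrat Δ q0 f m σ ∧
      ∀ (h₁ h₂ : List ((Fin m → Q) × A)) (v₁ v₂ : Fin m → Q),
        h₁.map (fun p => (countAbs p.1, p.2)) = h₂.map (fun p => (countAbs p.1, p.2)) →
        countAbs v₁ = countAbs v₂ →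
        σ h₁ v₁ = σ h₂ v₂ := by
  obtain ⟨σ₀, hσ₀⟩ := hw
  refine ⟨fun h v =>
      σ₀ (recon Δ q0 (fun _ => q0) (h.map fun p => (countAbs p.1, p.2)) (countAbs v)).1
         (recon Δ q0 (fun _ => q0) (h.map fun p => (countAbs p.1, p.2)) (countAbs v)).2,
    ?_, ?_⟩
  · intro ρ acts h0 hacts htrans
    have hex : ∀ n, (∃ π : Equiv.Perm (Fin m), playAux Δ q0 acts ρ n = ρ n ∘ π) →
        ∃ w : Fin m → Q, countAbs w = countAbs (ρ (n + 1)) ∧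
          ∀ j, Δ (playAux Δ q0 acts ρ n j) (acts n) (w j) := by
      rintro n ⟨π, hπ⟩
      exact ⟨ρ (n + 1) ∘ π, countAbs_comp_perm _ _,
        fun j => by rw [hπ]; exact htrans n (π j)⟩
    have hstep : ∀ n (he : ∃ w : Fin m → Q, countAbs w = countAbs (ρ (n + 1)) ∧
          ∀ j, Δ (playAux Δ q0 acts ρ n j) (acts n) (w j)),
        playAux Δ q0 acts ρ (n + 1) = he.choose := by
      intro n he
      show stepFn Δ q0 (playAux Δ q0 acts ρ n) (acts n) (countAbs (ρ (n + 1))) = _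
      unfold stepFn
      rw [dif_pos he]
    have claimA : ∀ n, ∃ π : Equiv.Perm (Fin m), playAux Δ q0 acts ρ n = ρ n ∘ π := by
      intro n
      induction n with
      | zero =>
        refine ⟨Equiv.refl _, ?_⟩
        funext j
        simp [playAux, h0]
      | succ n ih =>
        have he := hex n ih
        obtain ⟨π', hπ'⟩ := exists_perm_of_countAbs_eq he.choose_spec.1
        exact ⟨π', by rw [hstep n he, hπ']⟩
    have htransP : ∀ n j, Δ (playAux Δ q0 acts ρ n j) (acts n)
        (playAux Δ q0 acts ρ (n + 1) j) := by
      intro n j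
      have he := hex n (claimA n)
      rw [hstep n he]
      exact he.choose_spec.2 j
    have hcountP : ∀ n, countAbs (playAux Δ q0 acts ρ n) = countAbs (ρ n) := by
      intro n
      obtain ⟨π, hπ⟩ := claimA n
      rw [hπ, countAbs_comp_perm]
    have hcons : ∀ n, acts n = σ₀
        (List.ofFn fun i : Fin n => (playAux Δ q0 acts ρ i.1, acts i.1))
        (playAux Δ q0 acts ρ n) := by
      intro n
      have h2 := recon_spec Δ q0 acts ρ n 0
      simp only [Nat.zero_add] at h2
      have hP0 : playAux Δ q0 acts ρ 0 = (fun _ => q0 : Fin m → Q) := rfl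
      rw [hP0] at h2
      rw [hacts n]
      simp only [List.map_ofFn, Function.comp_def]
      rw [h2]
    obtain ⟨n, hn⟩ := hσ₀ (playAux Δ q0 acts ρ) acts rfl hcons htransP
    obtain ⟨π, hπ⟩ := claimA n
    refine ⟨n, fun j => ?_⟩
    have := hn (π.symm j)
    rw [hπ] at this
    simpa using this
  · intro h₁ h₂ v₁ v₂ hh hv
    simp only [hh, hv]
end

section
/- A play in the support arena is realisable (i.e., is the projection of a play of the m-population game for some finite m) if and only if it has bounded capacity (i.e., there is a uniform bound on the number of entries over all its accumulators). -/
variable {Q A : Type}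

/-- Domain of a transfer graph. -/
def dom (G : Set (Q × Q)) : Set Q := {q | ∃ r, (q, r) ∈ G}

/-- Image of a transfer graph. -/
def im (G : Set (Q × Q)) : Set Q := {r | ∃ q, (q, r) ∈ G}

/-- An (infinite) play in the support arena: `G n` is the transfer graph used
between the supports `S n` and `S (n+1)`, compatible with the letter `act n`. -/
structure SupportPlay (Δ : Q → A → Q → Prop) (q0 : Q) where
  S : ℕ → Set Q
  act : ℕ → A
  G : ℕ → Set (Q × Q)
  init : S 0 = {q0}
  compat : ∀ n, ∀ p ∈ G n, Δ p.1 (act n) p.2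
  hdom : ∀ n, dom (G n) = S n
  him : ∀ n, im (G n) = S (n + 1)

/-- A play of the m-population game: all agents start in q0, and at each step every
agent follows a transition labelled by the common letter. -/
def IsPopPlay (Δ : Q → A → Q → Prop) (q0 : Q) {m : ℕ}
    (ρ : ℕ → Fin m → Q) (acts : ℕ → A) : Prop :=
  ρ 0 = (fun _ => q0) ∧ ∀ n j, Δ (ρ n j) (acts n) (ρ (n + 1) j)

/-- The play of the m-population game `(ρ, acts)` projects onto the support-arena
play `P`: supports are the sets of occupied states, transfer graphs the agent-used edges. -/
def ProjectsTo {Δ : Q → A → Q → Prop} {q0 : Q} {m : ℕ}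
    (ρ : ℕ → Fin m → Q) (acts : ℕ → A) (P : SupportPlay Δ q0) : Prop :=
  (∀ n, P.S n = {q | ∃ j, ρ n j = q}) ∧
  (∀ n, P.act n = acts n) ∧
  (∀ n, P.G n = {p | ∃ j, ρ n j = p.1 ∧ ρ (n + 1) j = p.2})

/-- A support-arena play is realisable if it is the projection of a play of the
m-population game for some finite m. -/
def Realisable {Δ : Q → A → Q → Prop} {q0 : Q} (P : SupportPlay Δ q0) : Prop :=
  ∃ (m : ℕ) (ρ : ℕ → Fin m → Q) (acts : ℕ → A),
    IsPopPlay Δ q0 ρ acts ∧ ProjectsTo ρ acts P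

/-- An accumulator: a successor-closed sequence of subsets of the supports. -/
def IsAccumulator (S : ℕ → Set Q) (G : ℕ → Set (Q × Q)) (T : ℕ → Set Q) : Prop :=
  (∀ j, T j ⊆ S j) ∧ ∀ j s t, s ∈ T j → (s, t) ∈ G j → t ∈ T (j + 1)

/-- The entries of an accumulator: edges entering the accumulator from outside. -/
def Entries (G : ℕ → Set (Q × Q)) (T : ℕ → Set Q) : Set (ℕ × Q × Q) :=
  {e | (e.2.1, e.2.2) ∈ G e.1 ∧ e.2.1 ∉ T e.1 ∧ e.2.2 ∈ T (e.1 + 1)}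

/-- A play has bounded capacity if the number of entries of its accumulators is
uniformly bounded. -/
def BoundedCapacity {Δ : Q → A → Q → Prop} {q0 : Q} (P : SupportPlay Δ q0) : Prop :=
  ∃ B : ℕ, ∀ T, IsAccumulator P.S P.G T → (Entries P.G T).encard ≤ B

/-!
In an `m`-population play an agent that is inside an accumulator stays inside, so it enters at
most once, and every accumulator has at most `m` entries.

Conversely, let `B` bound the capacity and fix a horizon `n`. Consider integer flows from `q₀`
through the first `n` layers that put at least one unit on every edge of the transfer graphs and
nothing elsewhere, and take one of least value `m`. Its residual graph goes forward along edges
carrying at least two units and backward along any edge. If it reaches layer `n`, augmenting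
along a simple path gives a flow of value `m - 1`, which is impossible. Otherwise the unreached
vertices form an accumulator containing all of layer `n`. The flow enters it only through its
entries, one unit each, and never leaves it, so `m` equals the number of entries and `m ≤ B`.
Adding runs raises the value to `B`, and the flow then splits into `B` agents covering the first
`n` layers. These populations form nonempty closed nested subsets of the compact space
`ℕ → Fin B → Q`, and a point in their intersection is a play of the `B`-population game
projecting onto the given play.
-/

section

open Finset Relation

theorem Relation.ReflTransGen.exists_injOn_path {α : Type*} {r : α → α → Prop} {a b : α}
    (h : ReflTransGen r a b) :
    ∃ (K : ℕ) (p : ℕ → α), p 0 = a ∧ p K = b ∧ (∀ i < K, r (p i) (p (i + 1))) ∧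
      Set.InjOn p (Set.Iic K) := by
  induction h with
  | refl =>
    refine ⟨0, fun _ => a, rfl, rfl, fun i hi => absurd hi (Nat.not_lt_zero i), ?_⟩
    intro i hi i' hi' _
    simp_all
  | @tail b c _ hbc ih =>
    obtain ⟨K, p, hp0, hpK, hstep, hinj⟩ := ih
    by_cases hc : c ∈ p '' Set.Iic K
    · obtain ⟨i, hi, rfl⟩ := hc
      exact ⟨i, p, hp0, rfl, fun i' hi' => hstep i' (lt_of_lt_of_le hi' hi),
        hinj.mono (Set.Iic_subset_Iic.2 hi)⟩
    refine ⟨K + 1, Function.update p (K + 1) c, by simp [hp0], by simp, fun i hi => ?_, ?_⟩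
    · rcases Nat.lt_succ_iff_lt_or_eq.1 hi with hi | rfl
      · simpa [Function.update, hi.ne, (hi.trans (lt_add_one K)).ne] using hstep i hi
      · simpa [Function.update, hpK] using hbc
    · rw [show Set.Iic (K + 1) = insert (K + 1) (Set.Iic K) from Order.Iic_succ K,
        Set.injOn_insert (by simp)]
      refine ⟨hinj.congr fun i hi => ?_, ?_⟩
      · simp [Function.update, (Nat.lt_succ_of_le hi).ne]
      · rw [Function.update_self]
        rintro ⟨i, hi, heq⟩
        rw [Function.update_of_ne (Nat.lt_succ_of_le hi).ne] at heq
        exact hc ⟨i, hi, heq⟩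

theorem exists_fiberwise_card_eq {ι κ α : Type*} [Fintype ι] [Fintype α] [DecidableEq κ]
    [DecidableEq α] (f : ι → κ) (c : κ → α → ℕ) (h : ∀ k, #{i | f i = k} = ∑ a, c k a) :
    ∃ g : ι → α, ∀ k a, #{i | f i = k ∧ g i = a} = c k a := by
  have e : ∀ k, {i // f i = k} ≃ Σ a, Fin (c k a) := fun k =>
    Fintype.equivOfCardEq (by rw [Fintype.card_subtype, h, Fintype.card_sigma]; simp)
  refine ⟨fun i => (e (f i) ⟨i, rfl⟩).1, fun k a => ?_⟩
  rw [← Fintype.card_subtype]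
  calc Fintype.card {i // f i = k ∧ (e (f i) ⟨i, rfl⟩).1 = a}
      = Fintype.card {x : {i // f i = k} // (e k x).1 = a} :=
        Fintype.card_congr <| (Equiv.subtypeSubtypeEquivSubtypeInter _ _).symm.trans
          (Equiv.subtypeEquivRight (by rintro ⟨i, rfl⟩; rfl))
    _ = Fintype.card {y : Σ a, Fin (c k a) // y.1 = a} :=
        Fintype.card_congr ((e k).subtypeEquiv fun _ => Iff.rfl)
    _ = c k a := by rw [Fintype.card_congr (Equiv.sigmaSubtype a), Fintype.card_fin]

namespace SupportPlay

variable {Δ : Q → A → Q → Prop} {q0 : Q} (P : SupportPlay Δ q0)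

theorem mem_S_iff {j : ℕ} {q : Q} : q ∈ P.S j ↔ ∃ t, (q, t) ∈ P.G j := by
  rw [← P.hdom j]; rfl

theorem mem_S_succ_iff {j : ℕ} {q : Q} : q ∈ P.S (j + 1) ↔ ∃ s, (s, q) ∈ P.G j := by
  rw [← P.him j]; rfl

theorem fst_mem_S {j : ℕ} {s t : Q} (h : (s, t) ∈ P.G j) : s ∈ P.S j :=
  P.mem_S_iff.2 ⟨t, h⟩

theorem snd_mem_S {j : ℕ} {s t : Q} (h : (s, t) ∈ P.G j) : t ∈ P.S (j + 1) :=
  P.mem_S_succ_iff.2 ⟨s, h⟩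

def IsRun (x : ℕ → Q) : Prop := x 0 = q0 ∧ ∀ i, (x i, x (i + 1)) ∈ P.G i

theorem exists_prefix_to {j : ℕ} {s : Q} (hs : s ∈ P.S j) :
    ∃ x : ℕ → Q, x 0 = q0 ∧ x j = s ∧ ∀ i < j, (x i, x (i + 1)) ∈ P.G i := by
  induction j generalizing s with
  | zero =>
    rw [P.init] at hs
    exact ⟨fun _ => q0, rfl, hs.symm, fun i hi => absurd hi (Nat.not_lt_zero i)⟩
  | succ j ih =>
    obtain ⟨r, hr⟩ := P.mem_S_succ_iff.1 hs
    obtain ⟨x, hx0, hxj, hx⟩ := ih (P.fst_mem_S hr)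
    refine ⟨Function.update x (j + 1) s, by simp [hx0], by simp, fun i hi => ?_⟩
    rcases Nat.lt_succ_iff_lt_or_eq.1 hi with hi | rfl
    · simpa [Function.update, hi.ne, (Nat.succ_lt_succ hi).ne, (hi.trans (lt_add_one j)).ne]
        using hx i hi
    · simpa [Function.update, hxj] using hr

theorem exists_run_from {k : ℕ} {q : Q} (hq : q ∈ P.S k) :
    ∃ x : ℕ → Q, x k = q ∧ ∀ i, k ≤ i → (x i, x (i + 1)) ∈ P.G i := by
  choose! next hnext using fun i (q : Q) (h : q ∈ P.S i) => P.mem_S_iff.1 h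
  let x : ℕ → Q := fun i => Nat.rec q (fun i xi => if i < k then q else next i xi) i
  have hx_succ : ∀ i, k ≤ i → x (i + 1) = next i (x i) := fun i hi => if_neg (not_lt.2 hi)
  have hxk : x k = q := by
    suffices ∀ i ≤ k, x i = q from this k le_rfl
    intro i hi
    induction i with
    | zero => rfl
    | succ i _ => exact if_pos hi
  have hmem : ∀ i, k ≤ i → x i ∈ P.S i := by
    intro i hi
    induction i, hi using Nat.le_induction with
    | base => rwa [hxk]
    | succ i hi ih => rw [hx_succ i hi]; exact P.snd_mem_S (hnext i _ ih)
  exact ⟨x, hxk, fun i hi => hx_succ i hi ▸ hnext i _ (hmem i hi)⟩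

theorem exists_isRun : ∃ x, P.IsRun x := by
  obtain ⟨x, hx0, hx⟩ := P.exists_run_from (k := 0) (by rw [P.init]; rfl)
  exact ⟨x, hx0, fun i => hx i i.zero_le⟩

theorem exists_isRun_through {j : ℕ} {s t : Q} (h : (s, t) ∈ P.G j) :
    ∃ x, P.IsRun x ∧ x j = s ∧ x (j + 1) = t := by
  obtain ⟨x, hx0, hxj, hx⟩ := P.exists_prefix_to (P.fst_mem_S h)
  obtain ⟨y, hyj, hy⟩ := P.exists_run_from (P.snd_mem_S h)
  refine ⟨fun i => if i ≤ j then x i else y i, ⟨by simpa using hx0, fun i => ?_⟩,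
    by simpa using hxj, by simpa using hyj⟩
  rcases lt_trichotomy i j with hi | rfl | hi
  · simpa [hi.le, Nat.succ_le_of_lt hi] using hx i hi
  · simpa [hxj, hyj] using h
  · simpa [hi.not_ge, (hi.trans (lt_add_one _)).not_ge] using hy i hi

end SupportPlay

variable {Δ : Q → A → Q → Prop} {q0 : Q}

theorem boundedCapacity_of_realisable {P : SupportPlay Δ q0} (h : Realisable P) :
    BoundedCapacity P := by
  obtain ⟨m, ρ, acts, -, -, -, hG⟩ := h
  refine ⟨m, fun T hT => ?_⟩
  have stays : ∀ i a b, a ≤ b → ρ a i ∈ T a → ρ b i ∈ T b := by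
    intro i a b hab
    induction b, hab using Nat.le_induction with
    | base => exact id
    | succ b _ ih => exact fun h => hT.2 b _ _ (ih h) (by rw [hG]; exact ⟨i, rfl, rfl⟩)
  have witness (e : Entries P.G T) : ∃ i, ρ e.1.1 i = e.1.2.1 ∧ ρ (e.1.1 + 1) i = e.1.2.2 := by
    have := e.2.1
    rwa [hG] at this
  choose w hw using witness
  have time_le : ∀ e e' : Entries P.G T, w e = w e' → e.1.1 ≤ e'.1.1 := by
    intro e e' hee'
    by_contra! hlt
    have := stays (w e) (e'.1.1 + 1) e.1.1 hlt (by rw [hee', (hw e').2]; exact e'.2.2.2)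
    rw [(hw e).1] at this
    exact e.2.2.1 this
  have w_inj : Function.Injective w := by
    intro e e' hee'
    have htime := le_antisymm (time_le e e' hee') (time_le e' e hee'.symm)
    obtain ⟨h1, h2⟩ := hw e
    obtain ⟨h1', h2'⟩ := hw e'
    rw [hee', htime] at h1 h2
    exact Subtype.ext (Prod.ext htime (Prod.ext (h1.symm.trans h1') (h2.symm.trans h2')))
  calc (Entries P.G T).encard = ENat.card (Entries P.G T) := rfl
    _ ≤ ENat.card (Fin m) := ENat.card_le_card_of_injective w_inj
    _ = m := by simp

/-! A flow `F : ℕ → Q → Q → ℤ` puts `F j s t` units on the edge from `(j, s)` to `(j + 1, t)`;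
vertices are pairs `(layer, state)`. -/

section Flows

variable [DecidableEq Q]

def pathFlow (x : ℕ → Q) : ℕ → Q → Q → ℤ :=
  fun j s t => if x j = s ∧ x (j + 1) = t then 1 else 0

def edgeFlow (u v : ℕ × Q) : ℕ → Q → Q → ℤ :=
  fun j s t => if u = (j, s) ∧ v = (j + 1, t) then 1 else 0

def walkFlow (p : ℕ → ℕ × Q) (K : ℕ) : ℕ → Q → Q → ℤ :=
  ∑ i ∈ range K, (edgeFlow (p (i + 1)) (p i) - edgeFlow (p i) (p (i + 1)))

theorem pathFlow_nonneg (x : ℕ → Q) (j : ℕ) (s t : Q) : 0 ≤ pathFlow x j s t := by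
  unfold pathFlow
  split_ifs <;> norm_num

theorem edgeFlow_eq_zero {u v : ℕ × Q} (h : v.1 ≠ u.1 + 1) : edgeFlow u v = 0 := by
  ext j s t
  simp only [edgeFlow, Pi.zero_apply, ite_eq_right_iff]
  rintro ⟨rfl, rfl⟩
  exact absurd rfl h

theorem walkFlow_apply (p : ℕ → ℕ × Q) (K j : ℕ) (s t : Q) :
    walkFlow p K j s t = #{i ∈ range K | p (i + 1) = (j, s) ∧ p i = (j + 1, t)} -
      #{i ∈ range K | p i = (j, s) ∧ p (i + 1) = (j + 1, t)} := by
  simp only [walkFlow, Finset.sum_apply, Pi.sub_apply, sum_sub_distrib, edgeFlow, sum_boole]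

end Flows

section Excess

variable [Fintype Q]

def outflow (F : ℕ → Q → Q → ℤ) (v : ℕ × Q) : ℤ := ∑ t, F v.1 v.2 t

def inflow (F : ℕ → Q → Q → ℤ) : ℕ × Q → ℤ
  | (0, _) => 0
  | (j + 1, q) => ∑ s, F j s q

def excess : (ℕ → Q → Q → ℤ) →+ (ℕ × Q → ℤ) where
  toFun F v := outflow F v - inflow F v
  map_zero' := by ext ⟨_ | j, q⟩ <;> simp [outflow, inflow]
  map_add' F G := by
    ext ⟨_ | j, q⟩
    · simp [outflow, inflow, sum_add_distrib]
    · simp only [outflow, inflow, Pi.add_apply, sum_add_distrib]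
      ring

theorem excess_apply (F : ℕ → Q → Q → ℤ) (v : ℕ × Q) :
    excess F v = outflow F v - inflow F v := rfl

theorem sum_mul_excess (F : ℕ → Q → Q → ℤ) (χ : ℕ × Q → ℤ) (n : ℕ) :
    ∑ j ∈ range n, ∑ q, χ (j, q) * excess F (j, q) =
      ∑ j ∈ range n, ∑ s, ∑ t, F j s t * (χ (j, s) - χ (j + 1, t)) +
        ∑ q, χ (n, q) * inflow F (n, q) := by
  induction n with
  | zero => simp [inflow]
  | succ n ih =>
    have hexc : ∑ q, χ (n, q) * excess F (n, q) =
        ∑ q, χ (n, q) * outflow F (n, q) - ∑ q, χ (n, q) * inflow F (n, q) := by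
      simp only [excess_apply, mul_sub, sum_sub_distrib]
    have hout : ∑ q, χ (n, q) * outflow F (n, q) = ∑ s, ∑ t, F n s t * χ (n, s) := by
      simp only [outflow, mul_sum]
      exact sum_congr rfl fun _ _ => sum_congr rfl fun _ _ => mul_comm _ _
    have hin : ∑ q, χ (n + 1, q) * inflow F (n + 1, q) = ∑ s, ∑ t, F n s t * χ (n + 1, t) := by
      simp only [inflow, mul_sum]
      rw [sum_comm]
      exact sum_congr rfl fun _ _ => sum_congr rfl fun _ _ => mul_comm _ _
    have hcut : ∑ s, ∑ t, F n s t * (χ (n, s) - χ (n + 1, t)) =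
        ∑ s, ∑ t, F n s t * χ (n, s) - ∑ s, ∑ t, F n s t * χ (n + 1, t) := by
      simp only [mul_sub, sum_sub_distrib]
    rw [sum_range_succ, ih, hexc, hout, sum_range_succ, hcut, hin]
    ring

variable [DecidableEq Q]

theorem excess_pathFlow (x : ℕ → Q) : excess (pathFlow x) = Pi.single (0, x 0) 1 := by
  ext ⟨_ | j, q⟩ <;>
    simp [excess_apply, outflow, inflow, pathFlow, Pi.single_apply, ite_and, eq_comm]

theorem excess_edgeFlow {u v : ℕ × Q} (h : v.1 = u.1 + 1) :
    excess (edgeFlow u v) = Pi.single u 1 - Pi.single v 1 := by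
  obtain ⟨j, s⟩ := u
  obtain ⟨_, t⟩ := v
  obtain rfl : _ = j + 1 := h
  ext ⟨_ | j', q⟩ <;>
    simp [excess_apply, outflow, inflow, edgeFlow, Pi.single_apply, ite_and, eq_comm] <;>
    split_ifs <;> simp_all

theorem excess_walkFlow {p : ℕ → ℕ × Q} {K : ℕ}
    (hp : ∀ i < K, (p (i + 1)).1 = (p i).1 + 1 ∨ (p i).1 = (p (i + 1)).1 + 1) :
    excess (walkFlow p K) = Pi.single (p K) 1 - Pi.single (p 0) 1 := by
  rw [walkFlow, map_sum]
  refine (sum_congr rfl fun i hi => ?_).trans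
    (sum_range_sub (fun i => (Pi.single (p i) 1 : ℕ × Q → ℤ)) K)
  rcases hp i (mem_range.1 hi) with h | h
  · rw [edgeFlow_eq_zero (by omega), map_sub, map_zero, excess_edgeFlow h]
    abel
  · rw [edgeFlow_eq_zero (u := p i) (by omega), sub_zero, excess_edgeFlow h]

end Excess

variable (P : SupportPlay Δ q0) in
/-- Forward along edges whose flow may drop by one, backward along any edge of the play. -/
def ResidualStep (n : ℕ) (F : ℕ → Q → Q → ℤ) (u v : ℕ × Q) : Prop :=
  (v.1 = u.1 + 1 ∧ u.1 < n ∧ 2 ≤ F u.1 u.2 v.2) ∨ (u.1 = v.1 + 1 ∧ (v.2, u.2) ∈ P.G v.1)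

variable (P : SupportPlay Δ q0) in
def unreached (n : ℕ) (F : ℕ → Q → Q → ℤ) (j : ℕ) : Set Q :=
  {q | q ∈ P.S j ∧ ¬ ReflTransGen (ResidualStep P n F) (0, q0) (j, q)}

open Classical in
variable (P : SupportPlay Δ q0) in
noncomputable def reachedIndicator (n : ℕ) (F : ℕ → Q → Q → ℤ) (v : ℕ × Q) : ℤ :=
  if ReflTransGen (ResidualStep P n F) (0, q0) v then 1 else 0

section CoverFlow

variable {P : SupportPlay Δ q0} {n : ℕ} {F : ℕ → Q → Q → ℤ}

theorem ResidualStep.two_le {j : ℕ} {s t : Q} (h : ResidualStep P n F (j, s) (j + 1, t)) :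
    2 ≤ F j s t := by
  rcases h with ⟨-, -, h⟩ | ⟨h, -⟩
  · exact h
  · dsimp only at h
    omega

theorem ResidualStep.mem_G {j : ℕ} {s t : Q} (h : ResidualStep P n F (j + 1, t) (j, s)) :
    (s, t) ∈ P.G j := by
  rcases h with ⟨h, -⟩ | ⟨-, h⟩
  · dsimp only at h
    omega
  · exact h

theorem isAccumulator_unreached : IsAccumulator P.S P.G (unreached P n F) :=
  ⟨fun _ _ hq => hq.1, fun _ _ _ hs hst =>
    ⟨P.snd_mem_S hst, fun ht => hs.2 (ht.tail (Or.inr ⟨rfl, hst⟩))⟩⟩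

variable [Fintype Q]

variable (P) in
/-- Only the first `n` layers are constrained; a flow of value `m` out of `q₀` has excess
`Pi.single (0, q0) m`. -/
structure IsCoverFlow (n : ℕ) (F : ℕ → Q → Q → ℤ) (e : ℕ × Q → ℤ) : Prop where
  one_le : ∀ j < n, ∀ s t, (s, t) ∈ P.G j → 1 ≤ F j s t
  eq_zero : ∀ j < n, ∀ s t, (s, t) ∉ P.G j → F j s t = 0
  excess_eq : ∀ v : ℕ × Q, v.1 < n → excess F v = e v

variable {e : ℕ × Q → ℤ}

theorem IsCoverFlow.nonneg (hF : IsCoverFlow P n F e) {j : ℕ} (hj : j < n) (s t : Q) :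
    0 ≤ F j s t := by
  by_cases h : (s, t) ∈ P.G j
  · exact zero_le_one.trans (hF.one_le j hj s t h)
  · exact (hF.eq_zero j hj s t h).ge

theorem IsCoverFlow.pos_iff (hF : IsCoverFlow P n F e) {j : ℕ} (hj : j < n) (s t : Q) :
    0 < F j s t ↔ (s, t) ∈ P.G j := by
  refine ⟨fun hpos => ?_, fun h => hF.one_le j hj s t h⟩
  by_contra h
  exact hpos.ne' (hF.eq_zero j hj s t h)

theorem IsCoverFlow.congr (hF : IsCoverFlow P n F e) {e' : ℕ × Q → ℤ}
    (h : ∀ v : ℕ × Q, v.1 < n → e v = e' v) : IsCoverFlow P n F e' :=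
  ⟨hF.one_le, hF.eq_zero, fun v hv => (hF.excess_eq v hv).trans (h v hv)⟩

open Classical in
theorem IsCoverFlow.crossing_eq_ite_mem_entries (hF : IsCoverFlow P n F e) {j : ℕ} (hj : j < n)
    (s t : Q) :
    F j s t * (reachedIndicator P n F (j, s) - reachedIndicator P n F (j + 1, t)) =
      if (j, s, t) ∈ Entries P.G (unreached P n F) then 1 else 0 := by
  set R : ℕ × Q → Prop := ReflTransGen (ResidualStep P n F) (0, q0)
  have mem_T : ∀ j q, q ∈ unreached P n F j ↔ q ∈ P.S j ∧ ¬ R (j, q) := fun _ _ => Iff.rfl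
  have hχ : ∀ v, reachedIndicator P n F v = if R v then 1 else 0 := fun _ => rfl
  -- an edge leaving the reached set carries one unit, or a forward step would cross it; an edge
  -- entering it carries none, or a backward step would reach its tail
  by_cases hs : R (j, s) <;> by_cases ht : R (j + 1, t)
  · simp [hχ, hs, ht, Entries, mem_T]
  · have hle : F j s t ≤ 1 := by
      by_contra! h
      exact ht (hs.tail (Or.inl ⟨rfl, hj, h⟩))
    by_cases hst : (s, t) ∈ P.G j
    · have h1 : F j s t = 1 := le_antisymm hle (hF.one_le j hj s t hst)
      simp [hχ, hs, ht, Entries, mem_T, hst, P.snd_mem_S hst, h1]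
    · simp [hχ, hs, ht, Entries, mem_T, hst, hF.eq_zero j hj s t hst]
  · have hst : (s, t) ∉ P.G j := fun hst => hs (ht.tail (Or.inr ⟨rfl, hst⟩))
    simp [hχ, hs, ht, Entries, mem_T, hF.eq_zero j hj s t hst]
  · simp [hχ, hs, ht, Entries, mem_T]
    exact fun hst hs' => absurd (P.fst_mem_S hst) hs'

variable [DecidableEq Q]

theorem isCoverFlow_sum_pathFlow {ι : Type*} (s : Finset ι) (x : ι → ℕ → Q)
    (hrun : ∀ i ∈ s, P.IsRun (x i))
    (hcover : ∀ j < n, ∀ a b, (a, b) ∈ P.G j → ∃ i ∈ s, x i j = a ∧ x i (j + 1) = b) :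
    IsCoverFlow P n (∑ i ∈ s, pathFlow (x i)) (Pi.single (0, q0) (#s : ℤ)) where
  one_le j hj a b hab := by
    obtain ⟨i, hi, hia, hib⟩ := hcover j hj a b hab
    simp only [Finset.sum_apply]
    calc (1 : ℤ) = pathFlow (x i) j a b := by simp [pathFlow, hia, hib]
      _ ≤ ∑ i ∈ s, pathFlow (x i) j a b :=
        single_le_sum (f := fun i => pathFlow (x i) j a b) (fun i _ => pathFlow_nonneg _ _ _ _) hi
  eq_zero j hj a b hab := by
    simp only [Finset.sum_apply]
    refine sum_eq_zero fun i hi => if_neg ?_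
    rintro ⟨rfl, rfl⟩
    exact hab ((hrun i hi).2 j)
  excess_eq v _ := by
    rw [map_sum, Finset.sum_apply]
    simp_rw [excess_pathFlow]
    rw [sum_congr rfl fun i hi => by rw [(hrun i hi).1]]
    simp [Pi.single_apply]

theorem IsCoverFlow.add_pathFlow (hF : IsCoverFlow P n F e) {x : ℕ → Q} (hx : P.IsRun x)
    (c : ℕ) : IsCoverFlow P n (F + c • pathFlow x) (e + Pi.single (0, q0) (c : ℤ)) where
  one_le j hj a b hab := by
    have h1 := hF.one_le j hj a b hab
    have h2 := nsmul_nonneg (pathFlow_nonneg x j a b) c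
    show 1 ≤ F j a b + c • pathFlow x j a b
    linarith
  eq_zero j hj a b hab := by
    have : pathFlow x j a b = 0 := if_neg fun ⟨ha, hb⟩ => hab (ha ▸ hb ▸ hx.2 j)
    simp [hF.eq_zero j hj a b hab, this]
  excess_eq v hv := by
    rw [map_add, map_nsmul, excess_pathFlow, hx.1, Pi.add_apply, hF.excess_eq v hv]
    simp [Pi.single_apply]

theorem IsCoverFlow.augment (hF : IsCoverFlow P n F e) {K : ℕ} {p : ℕ → ℕ × Q}
    (hstep : ∀ i < K, ResidualStep P n F (p i) (p (i + 1))) (hinj : Set.InjOn p (Set.Iic K)) :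
    IsCoverFlow P n (F + walkFlow p K) (e + Pi.single (p K) 1 - Pi.single (p 0) 1) := by
  set fwd : ℕ → Q → Q → ℕ := fun j s t => #{i ∈ range K | p i = (j, s) ∧ p (i + 1) = (j + 1, t)}
  set bwd : ℕ → Q → Q → ℕ := fun j s t => #{i ∈ range K | p (i + 1) = (j, s) ∧ p i = (j + 1, t)}
  have fwd_le_one : ∀ j s t, fwd j s t ≤ 1 := fun j s t => card_le_one.2 fun i hi i' hi' => by
    simp only [mem_filter, mem_range] at hi hi'
    exact hinj (Set.mem_Iic.2 hi.1.le) (Set.mem_Iic.2 hi'.1.le) (hi.2.1.trans hi'.2.1.symm)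
  have two_le_of_fwd : ∀ j s t, 0 < fwd j s t → 2 ≤ F j s t := fun j s t h => by
    obtain ⟨i, hi⟩ := card_pos.1 h
    simp only [mem_filter, mem_range] at hi
    exact (hi.2.1 ▸ hi.2.2 ▸ hstep i hi.1).two_le
  have mem_of_bwd : ∀ j s t, 0 < bwd j s t → (s, t) ∈ P.G j := fun j s t h => by
    obtain ⟨i, hi⟩ := card_pos.1 h
    simp only [mem_filter, mem_range] at hi
    exact (hi.2.1 ▸ hi.2.2 ▸ hstep i hi.1).mem_G
  refine ⟨fun j hj s t hst => ?_, fun j hj s t hst => ?_, fun v hv => ?_⟩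
  · have h1 := hF.one_le j hj s t hst
    have h2 := fwd_le_one j s t
    simp only [Pi.add_apply, walkFlow_apply]
    change 1 ≤ F j s t + ((bwd j s t : ℤ) - (fwd j s t : ℤ))
    rcases Nat.eq_zero_or_pos (fwd j s t) with h | h
    · omega
    · have := two_le_of_fwd j s t h
      omega
  · have hb : bwd j s t = 0 := Nat.eq_zero_of_not_pos fun h => hst (mem_of_bwd j s t h)
    have hf : fwd j s t = 0 := Nat.eq_zero_of_not_pos fun h => by
      have := two_le_of_fwd j s t h
      rw [hF.eq_zero j hj s t hst] at this
      omega
    simp only [Pi.add_apply, walkFlow_apply, hF.eq_zero j hj s t hst]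
    simp only [fwd, bwd] at hb hf
    simp [hb, hf]
  · rw [map_add, Pi.add_apply, excess_walkFlow fun i hi => (hstep i hi).imp And.left And.left,
      hF.excess_eq v hv]
    simp only [Pi.sub_apply, Pi.add_apply]
    ring

theorem IsCoverFlow.le_of_unreachable {m B : ℕ} (hF : IsCoverFlow P n F (Pi.single (0, q0) m))
    (hB : ∀ T, IsAccumulator P.S P.G T → (Entries P.G T).encard ≤ B)
    (hreach : ∀ q, ¬ ReflTransGen (ResidualStep P n F) (0, q0) (n, q)) : m ≤ B := by
  classical
  set χ := reachedIndicator P n F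
  set E := {e ∈ range n ×ˢ (univ : Finset (Q × Q)) | e ∈ Entries P.G (unreached P n F)}
  have hn : 0 < n := Nat.pos_of_ne_zero fun h => hreach q0 (h ▸ ReflTransGen.refl)
  have hsource : ∑ j ∈ range n, ∑ q, χ (j, q) * excess F (j, q) = m := by
    rw [sum_congr rfl fun j hj => sum_congr rfl fun q _ => by
      rw [hF.excess_eq (j, q) (mem_range.1 hj)]]
    simp [Pi.single_apply, χ, reachedIndicator, ite_and, hn, ReflTransGen.refl]
  have hsink : ∑ q, χ (n, q) * inflow F (n, q) = 0 :=
    sum_eq_zero fun q _ => by simp [χ, reachedIndicator, hreach q]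
  have hcut : ∑ j ∈ range n, ∑ s, ∑ t, F j s t * (χ (j, s) - χ (j + 1, t)) = #E := by
    rw [← sum_boole, sum_product]
    refine sum_congr rfl fun j hj => ?_
    rw [← univ_product_univ, sum_product]
    exact sum_congr rfl fun s _ => sum_congr rfl fun t _ =>
      hF.crossing_eq_ite_mem_entries (mem_range.1 hj) s t
  have hE : (#E : ℕ∞) ≤ B := calc
    (#E : ℕ∞) = (E : Set (ℕ × Q × Q)).encard := (Set.encard_coe_eq_coe_finsetCard E).symm
    _ ≤ (Entries P.G (unreached P n F)).encard :=
      Set.encard_le_encard fun e he => (mem_filter.1 he).2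
    _ ≤ B := hB _ isAccumulator_unreached
  have := sum_mul_excess F χ n
  rw [hsource, hsink, hcut, add_zero] at this
  have : #E ≤ B := by exact_mod_cast hE
  omega

variable (P) in
theorem exists_isCoverFlow (n : ℕ) : ∃ m : ℕ, ∃ F, IsCoverFlow P n F (Pi.single (0, q0) m) := by
  classical
  have : Nonempty Q := ⟨q0⟩
  choose! x hx using fun (e : ℕ × Q × Q) (h : (e.2.1, e.2.2) ∈ P.G e.1) =>
    P.exists_isRun_through h
  let E := {e ∈ range n ×ˢ (univ : Finset (Q × Q)) | (e.2.1, e.2.2) ∈ P.G e.1}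
  refine ⟨#E, _, isCoverFlow_sum_pathFlow E x (fun e he => (hx e (mem_filter.1 he).2).1) ?_⟩
  intro j hj a b hab
  exact ⟨(j, a, b), by simp [E, hj, hab], (hx (j, a, b) hab).2⟩

theorem exists_isCoverFlow_of_capacity {B : ℕ}
    (hB : ∀ T, IsAccumulator P.S P.G T → (Entries P.G T).encard ≤ B) (n : ℕ) :
    ∃ F, IsCoverFlow P n F (Pi.single (0, q0) B) := by
  classical
  have hex := exists_isCoverFlow P n
  obtain ⟨F, hF⟩ := Nat.find_spec hex
  have hmB : Nat.find hex ≤ B := by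
    by_contra! hlt
    by_cases hreach : ∃ q, ReflTransGen (ResidualStep P n F) (0, q0) (n, q)
    · obtain ⟨q, hq⟩ := hreach
      obtain ⟨K, p, hp0, hpK, hstep, hinj⟩ := hq.exists_injOn_path
      refine Nat.find_min hex (Nat.sub_lt (by omega) one_pos) ⟨_, (hF.augment hstep hinj).congr ?_⟩
      intro v hv
      have hvK : v ≠ p K := by
        rintro rfl
        rw [hpK] at hv
        exact lt_irrefl n hv
      simp only [Pi.sub_apply, Pi.add_apply, Pi.single_apply, hp0, hvK, if_false, add_zero]
      split_ifs <;> omega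
    · exact hlt.not_ge (hF.le_of_unreachable hB (not_exists.1 hreach))
  obtain ⟨x, hx⟩ := P.exists_isRun
  refine ⟨_, (hF.add_pathFlow hx (B - Nat.find hex)).congr fun v _ => ?_⟩
  rw [← Pi.single_add, Nat.cast_sub hmB, add_sub_cancel]

def usedEdges {ι : Type*} (x y : ι → Q) : Set (Q × Q) := {p | ∃ i, x i = p.1 ∧ y i = p.2}

theorem IsCoverFlow.card_agents_eq_outflow {B : ℕ} (hF : IsCoverFlow P n F (Pi.single (0, q0) B))
    {ρ : ℕ → Fin B → Q} (hρ0 : ρ 0 = fun _ => q0) {j : ℕ} (hj : j < n)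
    (hρ : ∀ k < j, ∀ s t, (#{i | ρ k i = s ∧ ρ (k + 1) i = t} : ℤ) = F k s t) (q : Q) :
    (#{i | ρ j i = q} : ℤ) = outflow F (j, q) := by
  have hexc := hF.excess_eq (j, q) hj
  rw [excess_apply] at hexc
  rcases j with _ | j
  · simp only [inflow, sub_zero, Pi.single_apply, Prod.mk.injEq, true_and] at hexc
    rw [hexc, hρ0]
    split_ifs with h
    · simp [h]
    · simp [Ne.symm h]
  · simp only [Pi.single_apply, Prod.mk.injEq, Nat.add_one_ne_zero, false_and, if_false,
      sub_eq_zero] at hexc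
    rw [hexc, card_eq_sum_card_fiberwise (f := ρ j) (t := univ) (fun _ _ => mem_univ _)]
    push_cast
    refine sum_congr rfl fun s _ => ?_
    rw [filter_filter, ← hρ j (lt_add_one j) s q]
    simp only [and_comm]

theorem IsCoverFlow.exists_agents {B : ℕ} (hF : IsCoverFlow P n F (Pi.single (0, q0) B)) :
    ∃ ρ : ℕ → Fin B → Q, ρ 0 = (fun _ => q0) ∧
      ∀ j < n, usedEdges (ρ j) (ρ (j + 1)) = P.G j := by
  have hcount : ∀ j ≤ n, ∃ ρ : ℕ → Fin B → Q, ρ 0 = (fun _ => q0) ∧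
      ∀ k < j, ∀ s t, (#{i | ρ k i = s ∧ ρ (k + 1) i = t} : ℤ) = F k s t := by
    intro j hj
    induction j with
    | zero => exact ⟨fun _ _ => q0, rfl, fun k hk => absurd hk (Nat.not_lt_zero k)⟩
    | succ j ih =>
      obtain ⟨ρ, hρ0, hρ⟩ := ih (by omega)
      obtain ⟨g, hg⟩ := exists_fiberwise_card_eq (ρ j) (fun s t => (F j s t).toNat) fun q => by
        have : ((∑ t, (F j q t).toNat : ℕ) : ℤ) = outflow F (j, q) := by
          push_cast
          exact sum_congr rfl fun t _ => Int.toNat_of_nonneg (hF.nonneg (by omega) q t)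
        exact_mod_cast (hF.card_agents_eq_outflow hρ0 (by omega) hρ q).trans this.symm
      refine ⟨fun k => if k ≤ j then ρ k else g, by simpa using hρ0, fun k hk s t => ?_⟩
      rcases Nat.lt_succ_iff_lt_or_eq.1 hk with hk | rfl
      · simpa [hk.le, Nat.succ_le_of_lt hk] using hρ k hk s t
      · simpa [hg] using Int.toNat_of_nonneg (hF.nonneg (show k < n by omega) s t)
  obtain ⟨ρ, hρ0, hρ⟩ := hcount n le_rfl
  refine ⟨ρ, hρ0, fun j hj => ?_⟩
  ext ⟨s, t⟩
  rw [← hF.pos_iff hj, ← hρ j hj s t]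
  simp [usedEdges, card_pos, Finset.Nonempty]

end CoverFlow

theorem realisable_of_forall_horizon [Finite Q] (P : SupportPlay Δ q0) {B : ℕ}
    (h : ∀ n, ∃ ρ : ℕ → Fin B → Q, ρ 0 = (fun _ => q0) ∧
      ∀ j < n, usedEdges (ρ j) (ρ (j + 1)) = P.G j) :
    Realisable P := by
  let _ : TopologicalSpace Q := ⊥
  have _ : DiscreteTopology Q := ⟨rfl⟩
  let C : ℕ → Set (ℕ → Fin B → Q) := fun n =>
    {ρ | ρ 0 = (fun _ => q0) ∧ ∀ j < n, usedEdges (ρ j) (ρ (j + 1)) = P.G j}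
  have hclosed : ∀ n, IsClosed (C n) := fun n => by
    simp only [C, Set.ofPred_and, Set.ofPred_forall]
    refine (isClosed_eq (continuous_apply 0) continuous_const).inter
      (isClosed_iInter fun j => isClosed_iInter fun _ => ?_)
    have hcont : Continuous fun ρ : ℕ → Fin B → Q => (ρ j, ρ (j + 1)) := by fun_prop
    exact (isClosed_discrete {x : (Fin B → Q) × (Fin B → Q) | usedEdges x.1 x.2 = P.G j}).preimage
      hcont
  obtain ⟨ρ, hρ⟩ := IsCompact.nonempty_iInter_of_sequence_nonempty_isCompact_isClosed C
    (fun n ρ hρ => ⟨hρ.1, fun j hj => hρ.2 j (hj.trans (lt_add_one n))⟩) h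
    (hclosed 0).isCompact hclosed
  rw [Set.mem_iInter] at hρ
  have hG : ∀ j, usedEdges (ρ j) (ρ (j + 1)) = P.G j := fun j => (hρ (j + 1)).2 j (lt_add_one j)
  refine ⟨B, ρ, P.act, ⟨(hρ 0).1, fun j i => P.compat j (ρ j i, ρ (j + 1) i) ?_⟩, fun j => ?_,
    fun _ => rfl, fun j => (hG j).symm⟩
  · rw [← hG j]
    exact ⟨i, rfl, rfl⟩
  · rw [← P.hdom j, ← hG j]
    ext q
    simp [dom, usedEdges]

end

theorem stmt3_general [Fintype Q] (Δ : Q → A → Q → Prop) (q0 : Q)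
    (P : SupportPlay Δ q0) :
    Realisable P ↔ BoundedCapacity P := by
  classical
  refine ⟨boundedCapacity_of_realisable, fun ⟨B, hB⟩ => ?_⟩
  refine realisable_of_forall_horizon (B := B) P fun n => ?_
  obtain ⟨F, hF⟩ := exists_isCoverFlow_of_capacity hB n
  exact hF.exists_agents

/-- A play in the support arena is realisable iff it has bounded capacity. -/
theorem stmt3 [Fintype Q] (Δ : Q → A → Q → Prop) (q0 : Q) (hc : Complete Δ)
    (P : SupportPlay Δ q0) :
    Realisable P ↔ BoundedCapacity P :=
  stmt3_general Δ q0 P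
end

section
/- If a play of the support arena is the projection of a play of the m-population game, then every accumulator of the support-arena play has at most m entries. -/
variable {Q A : Type}

/-- If a support-arena play is the projection of a play of the m-population game,
then every accumulator has at most m entries. -/
theorem stmt4 (Δ : Q → A → Q → Prop) (q0 : Q) (hc : Complete Δ)
    (P : SupportPlay Δ q0) (m : ℕ) (ρ : ℕ → Fin m → Q) (acts : ℕ → A)
    (hpop : IsPopPlay Δ q0 ρ acts) (hproj : ProjectsTo ρ acts P) :
    ∀ T, IsAccumulator P.S P.G T → (Entries P.G T).encard ≤ m := by
  intro T hT
  obtain ⟨hS, hact, hG⟩ := hproj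
  obtain ⟨h0, hstep⟩ := hpop
  -- edge of each agent is in G n
  have hedge : ∀ n j, (ρ n j, ρ (n+1) j) ∈ P.G n := by
    intro n j; rw [hG]; exact ⟨j, rfl, rfl⟩
  -- once an agent is in T, it stays
  have hstay : ∀ n j, ρ n j ∈ T n → ∀ k, n ≤ k → ρ k j ∈ T k := by
    intro n j hn k hk
    induction k with
    | zero =>
      have : n = 0 := Nat.le_zero.mp hk
      subst this; exact hn
    | succ k ih =>
      rcases Nat.lt_or_ge n (k+1) with h | h
      · have hk' : n ≤ k := Nat.lt_succ_iff.mp h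
        exact hT.2 k _ _ (ih hk') (hedge k j)
      · have : n = k + 1 := le_antisymm hk h
        subst this; exact hn
  -- choose an agent for each entry
  classical
  have hag : ∀ e ∈ Entries P.G T, ∃ j, ρ e.1 j = e.2.1 ∧ ρ (e.1+1) j = e.2.2 := by
    intro e he
    have := he.1
    rw [hG] at this
    exact this
  rcases Nat.eq_zero_or_pos m with hm | hm
  · subst hm
    have : Entries P.G T = ∅ := by
      ext e; simp only [Set.mem_empty_iff_false, iff_false]
      intro he
      obtain ⟨j, -⟩ := hag e he
      exact j.elim0
    simp [this]
  have : Nonempty (Fin m) := ⟨⟨0, hm⟩⟩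
  choose! f hf1 hf2 using hag
  have : (Set.univ : Set (Fin m)).encard = m := by
    simp [Set.encard_univ]
  rw [← this]
  apply Set.encard_le_encard_of_injOn (f := f) (fun _ _ => Set.mem_univ _)
  intro e1 he1 e2 he2 hfe
  rcases Nat.lt_trichotomy e1.1 e2.1 with h | h | h
  · exfalso
    have hin : ρ (e1.1+1) (f e1) ∈ T (e1.1+1) := (hf2 e1 he1) ▸ he1.2.2
    have := hstay _ _ hin e2.1 h
    rw [hfe, hf1 e2 he2] at this
    exact he2.2.1 this
  · have h1 := hf1 e1 he1; have h2 := hf2 e1 he1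
    have h3 := hf1 e2 he2; have h4 := hf2 e2 he2
    rw [hfe] at h1 h2
    obtain ⟨n1, s1, t1⟩ := e1; obtain ⟨n2, s2, t2⟩ := e2
    simp only at h h1 h2 h3 h4 ⊢
    subst h
    simp_all
  · exfalso
    have hin : ρ (e2.1+1) (f e2) ∈ T (e2.1+1) := (hf2 e2 he2) ▸ he2.2.2
    have := hstay _ _ hin e1.1 h
    rw [← hfe, hf1 e1 he1] at this
    exact he1.2.1 this
end

section
/- If every accumulator of a support-arena play has at most m entries, then the play is the projection of a play of the (|S₀|·|Q|^{m+1})-population game, constructed by initially placing |Q|^{m+1} agents on each state of S₀ and at each step splitting the agents in each state evenly among the outgoing edges of the transfer graph. -/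
variable {Q A : Type}

/-
Start with |Q|^(m+1) agents in q₀ and at every step split the agents of each state evenly
along the outgoing edges of the transfer graph. It suffices that every state of S n then
holds at least |Q| agents: every edge of G n receives a share of at least 1/|Q| of its
source, hence at least one agent, and the projection is exactly the given play.

Fix x ∈ S n. The states from which (n, x) cannot be reached form an accumulator whose
entries before time n are the edges leaving the backward cone of (n, x). Count the agents
inside the cone. Every cone state keeps at least a 1/|Q| share of its agents, along an edge
that stays in the cone. A step with no leaving edge loses nobody, a step with one leaving
edge only thins out one state, and a step with D ≥ 2 leaving edges still retains 1/|Q| of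
the fullest state, which holds 1/|Q| of the total. So each step divides the count by at most
|Q|^D, and since there are at most m entries, at least |Q| agents reach x.
-/

open Finset Relation

def Equiv.sigmaComm {α β : Type*} (γ : α → β → Type*) : (Σ a b, γ a b) ≃ Σ b a, γ a b where
  toFun x := ⟨x.2.1, x.1, x.2.2⟩
  invFun x := ⟨x.2.1, x.1, x.2.2⟩

theorem Finset.exists_even_split {ι : Type*} (F : Finset ι) (c : ℕ) :
    ∃ g : ι → ℕ, (∀ t ∉ F, g t = 0) ∧ (F.Nonempty → ∑ t ∈ F, g t = c) ∧
      ∀ t ∈ F, c / #F ≤ g t := by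
  classical
  rcases F.eq_empty_or_nonempty with rfl | hF
  · exact ⟨0, fun _ _ => rfl, by simp, by simp⟩
  obtain ⟨E, hEF, hE⟩ := F.exists_subset_card_eq (Nat.mod_lt c hF.card_pos).le
  refine ⟨fun t => if t ∈ F then c / #F + if t ∈ E then 1 else 0 else 0,
    fun t ht => if_neg ht, fun _ => ?_, fun t ht => by simp [ht]⟩
  rw [sum_ite_of_true fun _ h => h, sum_add_distrib, sum_const, sum_boole, filter_mem_eq_inter,
    inter_eq_right.2 hEF, hE, smul_eq_mul, Nat.cast_id, Nat.div_add_mod]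

noncomputable def Finset.evenSplit {ι : Type*} (F : Finset ι) (c : ℕ) : ι → ℕ :=
  (F.exists_even_split c).choose

theorem Finset.evenSplit_spec {ι : Type*} (F : Finset ι) (c : ℕ) :
    (∀ t ∉ F, F.evenSplit c t = 0) ∧ (F.Nonempty → ∑ t ∈ F, F.evenSplit c t = c) ∧
      ∀ t ∈ F, c / #F ≤ F.evenSplit c t :=
  (F.exists_even_split c).choose_spec

theorem Finset.exists_pow_le_of_pow_succ_le_sum {ι : Type*} {F : Finset ι} {g : ι → ℕ} {q e : ℕ}
    (hq : 0 < q) (hF : #F ≤ q) (h : q ^ (e + 1) ≤ ∑ i ∈ F, g i) : ∃ i ∈ F, q ^ e ≤ g i := by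
  refine exists_le_of_sum_le (nonempty_of_sum_ne_zero ((pow_pos hq _).trans_le h).ne') ?_
  calc ∑ _ ∈ F, q ^ e = #F * q ^ e := by rw [sum_const, smul_eq_mul]
    _ ≤ q ^ (e + 1) := by rw [pow_succ']; gcongr
    _ ≤ ∑ i ∈ F, g i := h

open Classical in
theorem Set.sum_card_fiber_le_encard {β : Type*} [Fintype β] (E : Set (ℕ × β)) (n : ℕ) :
    ((∑ j ∈ Finset.range n, #{p : β | (j, p) ∈ E} : ℕ) : ℕ∞) ≤ E.encard := by
  have hcard : #{e ∈ (Finset.range n ×ˢ Finset.univ : Finset (ℕ × β)) | e ∈ E} =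
      ∑ j ∈ Finset.range n, #{p : β | (j, p) ∈ E} := by
    simp only [card_filter, sum_product]
  rw [← hcard, ← Set.encard_coe_eq_coe_finsetCard]
  exact Set.encard_mono fun e he => (mem_filter.1 he).2

section Trajectories

variable {ι : Type*} [Fintype ι] (c : ℕ → ι → ℕ) (f : ℕ → ι → ι → ℕ)

noncomputable def flowSplitEquiv (hout : ∀ n s, ∑ t, f n s t = c n s) (n : ℕ) (s : ι) :
    Fin (c n s) ≃ Σ t, Fin (f n s t) :=
  Fintype.equivOfCardEq (by simp [hout])

noncomputable def flowStepEquiv (hout : ∀ n s, ∑ t, f n s t = c n s)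
    (hin : ∀ n t, ∑ s, f n s t = c (n + 1) t) (n : ℕ) :
    (Σ s, Fin (c n s)) ≃ Σ t, Fin (c (n + 1) t) :=
  (Equiv.sigmaCongrRight (flowSplitEquiv c f hout n)).trans <| (Equiv.sigmaComm _).trans <|
    Equiv.sigmaCongrRight fun t => Fintype.equivOfCardEq (by simp [hin])

noncomputable def flowAgentEquiv (hout : ∀ n s, ∑ t, f n s t = c n s)
    (hin : ∀ n t, ∑ s, f n s t = c (n + 1) t) {N : ℕ} (h0 : ∑ s, c 0 s = N) :
    (n : ℕ) → Fin N ≃ Σ s, Fin (c n s)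
  | 0 => Fintype.equivOfCardEq (by simp [h0])
  | n + 1 => (flowAgentEquiv hout hin h0 n).trans (flowStepEquiv c f hout hin n)

theorem exists_trajectories_of_flow {N : ℕ} (h0 : ∑ s, c 0 s = N)
    (hout : ∀ n s, ∑ t, f n s t = c n s) (hin : ∀ n t, ∑ s, f n s t = c (n + 1) t) :
    ∃ ρ : ℕ → Fin N → ι, (∀ n s, (∃ j, ρ n j = s) ↔ 0 < c n s) ∧
      ∀ n s t, (∃ j, ρ n j = s ∧ ρ (n + 1) j = t) ↔ 0 < f n s t := by
  set e := flowAgentEquiv c f hout hin h0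
  have he : ∀ n j, (e (n + 1) j).1 = (flowStepEquiv c f hout hin n (e n j)).1 := fun _ _ => rfl
  have hstep : ∀ n (p : Σ s, Fin (c n s)),
      (flowStepEquiv c f hout hin n p).1 = (flowSplitEquiv c f hout n p.1 p.2).1 := fun _ _ => rfl
  refine ⟨fun n j => (e n j).1, fun n s => ⟨?_, fun h => ?_⟩, fun n s t => ⟨?_, fun h => ?_⟩⟩
  · rintro ⟨j, rfl⟩
    exact Nat.zero_lt_of_lt (e n j).2.isLt
  · exact ⟨(e n).symm ⟨s, ⟨0, h⟩⟩, by simp⟩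
  · rintro ⟨j, rfl, rfl⟩
    simp only [he, hstep]
    exact Nat.zero_lt_of_lt (flowSplitEquiv c f hout n _ (e n j).2).2.isLt
  · refine ⟨(e n).symm ⟨s, (flowSplitEquiv c f hout n s).symm ⟨t, ⟨0, h⟩⟩⟩, by simp, ?_⟩
    dsimp only
    rw [he, Equiv.apply_symm_apply, hstep]
    simp

end Trajectories

namespace SupportPlay

variable {Δ : Q → A → Q → Prop} {q0 : Q} (P : SupportPlay Δ q0)

theorem mem_S_of_mem_G {n : ℕ} {s t : Q} (h : (s, t) ∈ P.G n) : s ∈ P.S n :=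
  P.hdom n ▸ ⟨t, h⟩

theorem mem_S_succ_of_mem_G {n : ℕ} {s t : Q} (h : (s, t) ∈ P.G n) : t ∈ P.S (n + 1) :=
  P.him n ▸ ⟨s, h⟩

def Step (a b : ℕ × Q) : Prop := b.1 = a.1 + 1 ∧ (a.2, b.2) ∈ P.G a.1

theorem reflTransGen_step_of_mem_S :
    ∀ {n : ℕ} {x : Q}, x ∈ P.S n → ReflTransGen P.Step (0, q0) (n, x)
  | 0, x, hx => by
    rw [P.init, Set.mem_singleton_iff] at hx
    rw [hx]
  | n + 1, x, hx => by
    obtain ⟨y, hy⟩ : x ∈ im (P.G n) := (P.him n).symm ▸ hx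
    exact (reflTransGen_step_of_mem_S (P.mem_S_of_mem_G hy)).tail ⟨rfl, hy⟩

theorem eq_or_fst_lt_of_reflTransGen_step {a b : ℕ × Q} (h : ReflTransGen P.Step a b) :
    a = b ∨ a.1 < b.1 := by
  induction h with
  | refl => exact .inl rfl
  | tail _ hbc ih => exact .inr (by rcases ih with rfl | h <;> rw [hbc.1] <;> omega)

def cannotReach (n : ℕ) (x : Q) (j : ℕ) : Set Q :=
  P.S j \ {s | ReflTransGen P.Step (j, s) (n, x)}

theorem isAccumulator_cannotReach (n : ℕ) (x : Q) : IsAccumulator P.S P.G (P.cannotReach n x) :=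
  ⟨fun _ => Set.sdiff_subset,
    fun _ _ _ hs hst => ⟨P.mem_S_succ_of_mem_G hst, fun ht => hs.2 (.head ⟨rfl, hst⟩ ht)⟩⟩

theorem q0_notMem_cannotReach {n : ℕ} {x : Q} (hx : x ∈ P.S n) : q0 ∉ P.cannotReach n x 0 :=
  fun h => h.2 (P.reflTransGen_step_of_mem_S hx)

section Outside

open Classical

variable [Fintype Q] (T : ℕ → Set Q)

noncomputable def outside (j : ℕ) : Finset Q := {s | s ∈ P.S j ∧ s ∉ T j}

noncomputable def entriesAt (j : ℕ) : Finset (Q × Q) := {p | (j, p) ∈ Entries P.G T}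

variable {P}

theorem mem_outside {j : ℕ} {s : Q} : s ∈ P.outside T j ↔ s ∈ P.S j ∧ s ∉ T j := by
  simp [outside]

theorem mem_entriesAt_iff {j : ℕ} {s t : Q} :
    (s, t) ∈ P.entriesAt T j ↔ (s, t) ∈ P.G j ∧ s ∉ T j ∧ t ∈ T (j + 1) := by
  simp [entriesAt, Entries]

theorem mem_entriesAt_of_notMem_outside {j : ℕ} {s t : Q} (hs : s ∈ P.outside T j)
    (ht : t ∉ P.outside T (j + 1)) (hst : (s, t) ∈ P.G j) : (s, t) ∈ P.entriesAt T j := by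
  rw [mem_outside, not_and, not_not] at *
  exact (mem_entriesAt_iff T).2 ⟨hst, hs.2, ht (P.mem_S_succ_of_mem_G hst)⟩

variable (P)

theorem mem_outside_cannotReach {n j : ℕ} {x s : Q} :
    s ∈ P.outside (P.cannotReach n x) j ↔ s ∈ P.S j ∧ ReflTransGen P.Step (j, s) (n, x) := by
  rw [mem_outside, cannotReach, Set.mem_sdiff, not_and, not_not]
  exact and_congr_right fun hs => ⟨fun h => h hs, fun h _ => h⟩

theorem exists_succ_outside_cannotReach {n j : ℕ} {x : Q} (hj : j < n) :
    ∀ s ∈ P.outside (P.cannotReach n x) j,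
      ∃ t ∈ P.outside (P.cannotReach n x) (j + 1), (s, t) ∈ P.G j := by
  intro s hs
  obtain ⟨-, hreach⟩ := P.mem_outside_cannotReach.1 hs
  rcases hreach.cases_head with h | ⟨⟨k, t⟩, ⟨rfl, hst⟩, ht⟩
  · cases h
    omega
  · exact ⟨t, P.mem_outside_cannotReach.2 ⟨P.mem_S_succ_of_mem_G hst, ht⟩, hst⟩

theorem outside_cannotReach_self_subset {n : ℕ} {x : Q} :
    P.outside (P.cannotReach n x) n ⊆ {x} := by
  intro s hs
  rcases P.eq_or_fst_lt_of_reflTransGen_step (P.mem_outside_cannotReach.1 hs).2 with h | h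
  · simp_all
  · exact absurd h (lt_irrefl _)

end Outside

open Classical in
/-- `c n s` agents occupy `s` at time `n`, and `f n s t` of them move along `(s, t)`. -/
structure IsEvenFlow [Fintype Q] (N : ℕ) (c : ℕ → Q → ℕ) (f : ℕ → Q → Q → ℕ) : Prop where
  count_zero : ∀ s, c 0 s = if s = q0 then N else 0
  sum_flow_out : ∀ n s, ∑ t, f n s t = c n s
  sum_flow_in : ∀ n t, ∑ s, f n s t = c (n + 1) t
  flow_eq_zero : ∀ n s t, (s, t) ∉ P.G n → f n s t = 0
  count_div_card_le_flow : ∀ n s t, (s, t) ∈ P.G n → c n s / Fintype.card Q ≤ f n s t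

open Classical in
theorem count_eq_zero_of_notMem [Fintype Q] {N : ℕ} {c : ℕ → Q → ℕ} {f : ℕ → Q → Q → ℕ}
    (h0 : ∀ s, c 0 s = if s = q0 then N else 0) (hin : ∀ n t, ∑ s, f n s t = c (n + 1) t)
    (hzero : ∀ n s t, (s, t) ∉ P.G n → f n s t = 0) : ∀ {n s}, s ∉ P.S n → c n s = 0
  | 0, s, hs => by
    rw [h0, if_neg]
    rintro rfl
    exact hs (P.init ▸ rfl)
  | n + 1, t, ht => by
    rw [← hin]
    exact sum_eq_zero fun s _ => hzero n s t fun hst => ht (P.mem_S_succ_of_mem_G hst)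

section Construction

open Classical

variable [Fintype Q]

noncomputable def outNbrs (n : ℕ) (s : Q) : Finset Q := {t | (s, t) ∈ P.G n}

noncomputable def evenCount (N : ℕ) : ℕ → Q → ℕ
  | 0 => fun s => if s = q0 then N else 0
  | n + 1 => fun t => ∑ s, (P.outNbrs n s).evenSplit (evenCount N n s) t

theorem exists_isEvenFlow (N : ℕ) : ∃ c f, P.IsEvenFlow N c f := by
  set c := P.evenCount N
  set f : ℕ → Q → Q → ℕ := fun n s => (P.outNbrs n s).evenSplit (c n s)
  have hsplit n s := evenSplit_spec (P.outNbrs n s) (c n s)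
  have hzero n s t (h : (s, t) ∉ P.G n) : f n s t = 0 := (hsplit n s).1 t (by simpa [outNbrs])
  have hin n t : ∑ s, f n s t = c (n + 1) t := rfl
  refine ⟨c, f, fun _ => rfl, fun n s => ?_, hin, hzero, fun n s t h => ?_⟩
  · by_cases hs : s ∈ P.S n
    · rw [← sum_subset (subset_univ _) fun t _ ht => (hsplit n s).1 t ht]
      refine (hsplit n s).2.1 ?_
      obtain ⟨t, ht⟩ : s ∈ dom (P.G n) := (P.hdom n).symm ▸ hs
      exact ⟨t, by simpa [outNbrs]⟩
    · rw [P.count_eq_zero_of_notMem (fun _ => rfl) hin hzero hs]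
      exact sum_eq_zero fun t _ => hzero n s t fun h => hs (P.mem_S_of_mem_G h)
  · have ht : t ∈ P.outNbrs n s := by simpa [outNbrs]
    exact (Nat.div_le_div_left (card_le_univ _) (card_pos.2 ⟨t, ht⟩)).trans
      ((hsplit n s).2.2 t ht)

end Construction

namespace IsEvenFlow

open Classical

variable [Fintype Q] {P} (T : ℕ → Set Q) {N m : ℕ} {c : ℕ → Q → ℕ} {f : ℕ → Q → Q → ℕ}

-- `∑ t ∈ P.outside T (j + 1), f j s t` counts the agents in `s` that stay outside `T`.
theorem sum_kept_le (hf : P.IsEvenFlow N c f) (j : ℕ) :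
    ∑ s ∈ P.outside T j, ∑ t ∈ P.outside T (j + 1), f j s t ≤
      ∑ t ∈ P.outside T (j + 1), c (j + 1) t := by
  rw [sum_comm]
  gcongr with t
  rw [← hf.sum_flow_in]
  exact sum_le_sum_of_subset (subset_univ _)

theorem kept_eq_count (hf : P.IsEvenFlow N c f) {j : ℕ} {s : Q} (hs : s ∈ P.outside T j)
    (hno : ∀ t, (s, t) ∉ P.entriesAt T j) : ∑ t ∈ P.outside T (j + 1), f j s t = c j s := by
  rw [← hf.sum_flow_out]
  exact sum_subset (subset_univ _) fun t _ ht =>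
    hf.flow_eq_zero j s t fun hst => hno t (mem_entriesAt_of_notMem_outside T hs ht hst)

theorem count_div_card_le_kept (hf : P.IsEvenFlow N c f) {j : ℕ} {s t : Q}
    (ht : t ∈ P.outside T (j + 1)) (hst : (s, t) ∈ P.G j) :
    c j s / Fintype.card Q ≤ ∑ t ∈ P.outside T (j + 1), f j s t :=
  (hf.count_div_card_le_flow j s t hst).trans (single_le_sum (fun _ _ => Nat.zero_le _) ht)

theorem sum_div_card_le_sum_kept (hf : P.IsEvenFlow N c f) (hq : 0 < Fintype.card Q) {j : ℕ}
    (hsucc : ∀ s ∈ P.outside T j, ∃ t ∈ P.outside T (j + 1), (s, t) ∈ P.G j) {s₀ t₀ : Q}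
    (he : P.entriesAt T j = {(s₀, t₀)}) :
    (∑ s ∈ P.outside T j, c j s) / Fintype.card Q ≤
      ∑ s ∈ P.outside T j, ∑ t ∈ P.outside T (j + 1), f j s t := by
  set q := Fintype.card Q
  have hs₀ : s₀ ∈ P.outside T j := by
    obtain ⟨hst₀, hs₀, -⟩ := (mem_entriesAt_iff T).1 (he ▸ mem_singleton_self _)
    exact (mem_outside T).2 ⟨P.mem_S_of_mem_G hst₀, hs₀⟩
  obtain ⟨t, ht, hst⟩ := hsucc s₀ hs₀
  rw [← add_sum_erase _ _ hs₀, ← add_sum_erase _ _ hs₀]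
  calc (c j s₀ + ∑ s ∈ (P.outside T j).erase s₀, c j s) / q
      ≤ (c j s₀ + q * ∑ s ∈ (P.outside T j).erase s₀, c j s) / q := by
        gcongr
        exact Nat.le_mul_of_pos_left _ hq
    _ = c j s₀ / q + ∑ s ∈ (P.outside T j).erase s₀, c j s := Nat.add_mul_div_left _ _ hq
    _ ≤ _ := by
      refine add_le_add (hf.count_div_card_le_kept T ht hst)
        (sum_le_sum fun s hs => (hf.kept_eq_count T (mem_of_mem_erase hs) fun t' ht' => ?_).ge)
      simp only [he, mem_singleton, Prod.mk.injEq] at ht'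
      exact ne_of_mem_erase hs ht'.1

theorem pow_le_sum_outside_succ (hf : P.IsEvenFlow N c f) (hq : 0 < Fintype.card Q) {j b : ℕ}
    (hsucc : ∀ s ∈ P.outside T j, ∃ t ∈ P.outside T (j + 1), (s, t) ∈ P.G j)
    (h : Fintype.card Q ^ (b + 1 + #(P.entriesAt T j)) ≤ ∑ s ∈ P.outside T j, c j s) :
    Fintype.card Q ^ (b + 1) ≤ ∑ s ∈ P.outside T (j + 1), c (j + 1) s := by
  set q := Fintype.card Q
  set D := #(P.entriesAt T j) with hD
  refine le_trans ?_ (hf.sum_kept_le T j)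
  obtain hD0 | hD1 | hD2 : D = 0 ∨ D = 1 ∨ 2 ≤ D := by omega
  · rw [hD0, add_zero] at h
    refine h.trans (sum_le_sum fun s hs => (hf.kept_eq_count T hs fun t ht => ?_).ge)
    simp [card_eq_zero.1 (hD ▸ hD0)] at ht
  · obtain ⟨⟨s₀, t₀⟩, he⟩ := card_eq_one.1 (hD ▸ hD1)
    refine le_trans ?_ (hf.sum_div_card_le_sum_kept T hq hsucc he)
    rw [hD1] at h
    exact (Nat.le_div_iff_mul_le hq).2 (by rwa [← pow_succ])
  · obtain ⟨s, hs, hcs⟩ :=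
      exists_pow_le_of_pow_succ_le_sum hq (card_le_univ _) (add_right_comm b 1 D ▸ h)
    obtain ⟨t, ht, hst⟩ := hsucc s hs
    calc q ^ (b + 1) ≤ q ^ (b + D) / q := (Nat.le_div_iff_mul_le hq).2 <| by
          rw [← pow_succ]
          exact Nat.pow_le_pow_right hq (by omega)
      _ ≤ c j s / q := Nat.div_le_div_right hcs
      _ ≤ _ := hf.count_div_card_le_kept T ht hst
      _ ≤ _ := single_le_sum (f := fun s => ∑ t ∈ P.outside T (j + 1), f j s t)
        (fun _ _ => Nat.zero_le _) hs

theorem pow_sub_le_sum_outside (hf : P.IsEvenFlow (Fintype.card Q ^ (m + 1)) c f)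
    (hq0 : q0 ∉ T 0) : ∀ {n : ℕ},
    (∀ j < n, ∀ s ∈ P.outside T j, ∃ t ∈ P.outside T (j + 1), (s, t) ∈ P.G j) →
    ∑ j ∈ range n, #(P.entriesAt T j) ≤ m →
    Fintype.card Q ^ (m + 1 - ∑ j ∈ range n, #(P.entriesAt T j)) ≤ ∑ s ∈ P.outside T n, c n s
  | 0, _, _ => by
    have hmem : q0 ∈ P.outside T 0 := (mem_outside T).2 ⟨P.init ▸ rfl, hq0⟩
    simpa [hf.count_zero] using single_le_sum (f := c 0) (fun _ _ => Nat.zero_le _) hmem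
  | n + 1, hsucc, hL => by
    rw [sum_range_succ] at hL ⊢
    set L := ∑ j ∈ range n, #(P.entriesAt T j)
    set D := #(P.entriesAt T n)
    have ih := pow_sub_le_sum_outside hf hq0 (n := n) (fun j hj => hsucc j (by omega)) (by omega)
    rw [show m + 1 - L = m - (L + D) + 1 + D by omega] at ih
    rw [show m + 1 - (L + D) = m - (L + D) + 1 by omega]
    exact hf.pow_le_sum_outside_succ T (Fintype.card_pos_iff.2 ⟨q0⟩) (hsucc n n.lt_succ_self) ih

theorem card_le_count (hf : P.IsEvenFlow (Fintype.card Q ^ (m + 1)) c f)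
    (hcap : ∀ T, IsAccumulator P.S P.G T → (Entries P.G T).encard ≤ m) {n : ℕ} {x : Q}
    (hx : x ∈ P.S n) : Fintype.card Q ≤ c n x := by
  set T := P.cannotReach n x
  have hL : ∑ j ∈ range n, #(P.entriesAt T j) ≤ m := by
    exact_mod_cast (Set.sum_card_fiber_le_encard _ n).trans
      (hcap T (P.isAccumulator_cannotReach n x))
  calc Fintype.card Q = Fintype.card Q ^ 1 := (pow_one _).symm
    _ ≤ Fintype.card Q ^ (m + 1 - ∑ j ∈ range n, #(P.entriesAt T j)) :=
      Nat.pow_le_pow_right (Fintype.card_pos_iff.2 ⟨q0⟩) (by omega)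
    _ ≤ ∑ s ∈ P.outside T n, c n s :=
      hf.pow_sub_le_sum_outside T (P.q0_notMem_cannotReach hx)
        (fun _ hj => P.exists_succ_outside_cannotReach hj) hL
    _ ≤ ∑ s ∈ {x}, c n s := sum_le_sum_of_subset P.outside_cannotReach_self_subset
    _ = c n x := sum_singleton _ _

theorem count_pos_iff (hf : P.IsEvenFlow (Fintype.card Q ^ (m + 1)) c f)
    (hcap : ∀ T, IsAccumulator P.S P.G T → (Entries P.G T).encard ≤ m) {n : ℕ} {s : Q} :
    0 < c n s ↔ s ∈ P.S n :=
  ⟨fun h => by_contra fun hs => h.ne'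
      (P.count_eq_zero_of_notMem hf.count_zero hf.sum_flow_in hf.flow_eq_zero hs),
    fun hs => (Fintype.card_pos_iff.2 ⟨q0⟩).trans_le (hf.card_le_count hcap hs)⟩

theorem flow_pos_iff (hf : P.IsEvenFlow (Fintype.card Q ^ (m + 1)) c f)
    (hcap : ∀ T, IsAccumulator P.S P.G T → (Entries P.G T).encard ≤ m) {n : ℕ} {s t : Q} :
    0 < f n s t ↔ (s, t) ∈ P.G n :=
  ⟨fun h => by_contra fun hst => h.ne' (hf.flow_eq_zero n s t hst),
    fun hst => (Nat.div_pos (hf.card_le_count hcap (P.mem_S_of_mem_G hst))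
      (Fintype.card_pos_iff.2 ⟨q0⟩)).trans_le (hf.count_div_card_le_flow n s t hst)⟩

end IsEvenFlow

end SupportPlay

theorem stmt5_general [Fintype Q] (Δ : Q → A → Q → Prop) (q0 : Q)
    (P : SupportPlay Δ q0) (m : ℕ)
    (hcap : ∀ T, IsAccumulator P.S P.G T → (Entries P.G T).encard ≤ m) :
    ∃ (ρ : ℕ → Fin (Nat.card (P.S 0) * Fintype.card Q ^ (m + 1)) → Q) (acts : ℕ → A),
      IsPopPlay Δ q0 ρ acts ∧ ProjectsTo ρ acts P := by
  classical
  obtain ⟨c, f, hf⟩ := P.exists_isEvenFlow (Fintype.card Q ^ (m + 1))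
  have h0 : ∑ s, c 0 s = Nat.card (P.S 0) * Fintype.card Q ^ (m + 1) := by
    simp [hf.count_zero, P.init]
  obtain ⟨ρ, hocc, hused⟩ := exists_trajectories_of_flow c f h0 hf.sum_flow_out hf.sum_flow_in
  have hS n s : (∃ j, ρ n j = s) ↔ s ∈ P.S n := (hocc n s).trans (hf.count_pos_iff hcap)
  have hG n s t : (∃ j, ρ n j = s ∧ ρ (n + 1) j = t) ↔ (s, t) ∈ P.G n :=
    (hused n s t).trans (hf.flow_pos_iff hcap)
  refine ⟨ρ, P.act, ⟨funext fun j => ?_, fun n j => P.compat n _ ((hG ..).1 ⟨j, rfl, rfl⟩)⟩,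
    fun n => ?_, fun _ => rfl, fun n => ?_⟩
  · simpa [P.init] using (hS 0 (ρ 0 j)).1 ⟨j, rfl⟩
  · ext s
    exact (hS n s).symm
  · ext ⟨s, t⟩
    exact (hG n s t).symm

/-- If every accumulator of a support-arena play has at most m entries, then the
play is the projection of a play of the (|S₀|·|Q|^(m+1))-population game. -/
theorem stmt5 [Fintype Q] (Δ : Q → A → Q → Prop) (q0 : Q) (hc : Complete Δ)
    (P : SupportPlay Δ q0) (m : ℕ)
    (hcap : ∀ T, IsAccumulator P.S P.G T → (Entries P.G T).encard ≤ m) :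
    ∃ (ρ : ℕ → Fin (Nat.card (P.S 0) * Fintype.card Q ^ (m + 1)) → Q) (acts : ℕ → A),
      IsPopPlay Δ q0 ρ acts ∧ ProjectsTo ρ acts P :=
  stmt5_general Δ q0 P m hcap
end

section
/- A support-arena play has infinite capacity if and only if there exists an index i such that the composed transfer graph G[i,j] leaks at G_{j+1} for infinitely many indices j. -/
variable {Q : Type}

/-- A support-arena play, letters forgotten: supports together with the sequence
of transfer graphs (`G n` goes from `S n` to `S (n+1)`). -/
structure GraphPlay (Q : Type) where
  S : ℕ → Set Q
  G : ℕ → Set (Q × Q)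
  hdom : ∀ n, dom (G n) = S n
  him : ∀ n, im (G n) = S (n + 1)

/-- The composed transfer graph G[i,j]: (s,t) ∈ G[i,j] iff there is a path
s = path i, ..., path j = t with (path k, path (k+1)) ∈ G k for i ≤ k < j. -/
def Gseg (G : ℕ → Set (Q × Q)) (i j : ℕ) : Set (Q × Q) :=
  {p | ∃ path : ℕ → Q, path i = p.1 ∧ path j = p.2 ∧
    ∀ k, i ≤ k → k < j → (path k, path (k + 1)) ∈ G k}

/-- Relational composition of transfer graphs. -/
def relComp (G H : Set (Q × Q)) : Set (Q × Q) := {p | ∃ z, (p.1, z) ∈ G ∧ (z, p.2) ∈ H}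

/-- G leaks at H. -/
def Leaks (G H : Set (Q × Q)) : Prop :=
  ∃ q x y : Q, (q, y) ∈ relComp G H ∧ (x, y) ∈ H ∧ (q, x) ∉ G

/-- G separates the pair (r,t). -/
def Separates (G : Set (Q × Q)) (r t : Q) : Prop := ∃ q, (q, r) ∈ G ∧ (q, t) ∉ G

/-- (r,t) ∈ R_k : r and t have a common descendant. -/
def Rrel (G : ℕ → Set (Q × Q)) (k : ℕ) (r t : Q) : Prop :=
  ∃ j, k ≤ j ∧ ∃ y, (r, y) ∈ Gseg G k j ∧ (t, y) ∈ Gseg G k j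

/-- Index i leaks infinitely often: G[i,j] leaks at G_{j+1} for infinitely many j. -/
def LeaksInfOften (G : ℕ → Set (Q × Q)) (i : ℕ) : Prop :=
  {j | Leaks (Gseg G i j) (G j)}.Infinite

/-- A play has infinite capacity if some accumulator has infinitely many entries. -/
def InfiniteCapacity (P : GraphPlay Q) : Prop :=
  ∃ T, IsAccumulator P.S P.G T ∧ (Entries P.G T).Infinite

-- ===== auxiliary lemmas =====
section Aux
variable {G : ℕ → Set (Q × Q)}

lemma Gseg_self {i : ℕ} {a b : Q} (h : (a, b) ∈ Gseg G i i) : a = b := by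
  obtain ⟨p, h1, h2, _⟩ := h
  exact (h1 : p i = a).symm.trans (h2 : p i = b)

lemma Gseg_refl (G : ℕ → Set (Q × Q)) (i : ℕ) (q : Q) : (q, q) ∈ Gseg G i i :=
  ⟨fun _ => q, rfl, rfl, fun _ hk hk' => absurd hk' (by omega)⟩

lemma Gseg_snoc {i j : ℕ} {a b c : Q} (hij : i ≤ j)
    (h : (a, b) ∈ Gseg G i j) (he : (b, c) ∈ G j) : (a, c) ∈ Gseg G i (j + 1) := by
  obtain ⟨p, h1, h2, h3⟩ := h
  refine ⟨Function.update p (j + 1) c, ?_, ?_, ?_⟩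
  · show Function.update p (j + 1) c i = a
    rw [Function.update_of_ne (by omega), (h1 : p i = a)]
  · show Function.update p (j + 1) c (j + 1) = c
    rw [Function.update_self]
  · intro k hk hk'
    rcases Nat.lt_or_ge k j with hlt | hge
    · rw [Function.update_of_ne (by omega), Function.update_of_ne (by omega)]
      exact h3 k hk hlt
    · have hkj : k = j := by omega
      subst hkj
      rw [Function.update_of_ne (by omega), Function.update_self, (h2 : p k = b)]
      exact he

lemma Gseg_unsnoc {i j : ℕ} {a c : Q} (hij : i ≤ j)
    (h : (a, c) ∈ Gseg G i (j + 1)) : ∃ b, (a, b) ∈ Gseg G i j ∧ (b, c) ∈ G j := by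
  obtain ⟨p, h1, h2, h3⟩ := h
  refine ⟨p j, ⟨p, h1, rfl, fun k hk hk' => h3 k hk (by omega)⟩, ?_⟩
  have := h3 j hij (by omega)
  rwa [h2] at this

lemma relComp_Gseg {i j : ℕ} {a c : Q} (hij : i ≤ j)
    (h : (a, c) ∈ relComp (Gseg G i j) (G j)) : (a, c) ∈ Gseg G i (j + 1) := by
  obtain ⟨z, h1, h2⟩ := h
  exact Gseg_snoc hij h1 h2

lemma Gseg_fst_mem_dom {i j : ℕ} {a b c : Q} (hij : i ≤ j)
    (h : (a, b) ∈ Gseg G i j) (he : (b, c) ∈ G j) : a ∈ dom (G i) := by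
  rcases Nat.eq_or_lt_of_le hij with heq | hlt
  · subst heq
    exact ⟨c, by rw [Gseg_self h]; exact he⟩
  · obtain ⟨p, h1, h2, h3⟩ := h
    have h1' : p i = a := h1
    exact ⟨p (i + 1), by rw [← h1']; exact h3 i le_rfl hlt⟩

lemma Gseg_snd_mem_im {i j : ℕ} {a b : Q} (hij : i ≤ j)
    (h : (a, b) ∈ Gseg G i (j + 1)) : b ∈ im (G j) := by
  obtain ⟨z, _, hz⟩ := Gseg_unsnoc hij h
  exact ⟨z, hz⟩

lemma exists_descendant (P : GraphPlay Q) {i : ℕ} {s : Q} (hs : s ∈ P.S i) :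
    ∀ j, i ≤ j → ∃ t, t ∈ P.S j ∧ (s, t) ∈ Gseg P.G i j := by
  refine Nat.le_induction ⟨s, hs, Gseg_refl _ _ _⟩ ?_
  rintro j hij ⟨t, ht, hseg⟩
  have : t ∈ dom (P.G j) := by rw [P.hdom j]; exact ht
  obtain ⟨u, hu⟩ := this
  exact ⟨u, by rw [← P.him j]; exact ⟨t, hu⟩, Gseg_snoc hij hseg hu⟩

lemma acc_closed {S T : ℕ → Set Q} (hT : IsAccumulator S G T)
    {i : ℕ} {q : Q} (hq : q ∈ T i) :
    ∀ j, i ≤ j → ∀ t, (q, t) ∈ Gseg G i j → t ∈ T j := by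
  refine Nat.le_induction ?_ ?_
  · intro t ht; rwa [← Gseg_self ht]
  · intro j hij IH t ht
    obtain ⟨z, hz1, hz2⟩ := Gseg_unsnoc hij ht
    exact hT.2 j z t (IH z hz1) hz2

lemma leak_of_rooted_entry {S T : ℕ → Set Q} (hT : IsAccumulator S G T)
    {i j : ℕ} {x y q : Q} (hij : i ≤ j) (he : (j, x, y) ∈ Entries G T)
    (hq : q ∈ T i) (hqy : (q, y) ∈ Gseg G i (j + 1)) :
    Leaks (Gseg G i j) (G j) := by
  obtain ⟨z, hz1, hz2⟩ := Gseg_unsnoc hij hqy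
  exact ⟨q, x, y, ⟨z, hz1, hz2⟩, he.1, fun hqx => he.2.1 (acc_closed hT hq j hij x hqx)⟩

lemma ancestor_pullback {i k : ℕ} {T : ℕ → Set Q} (hik : i ≤ k)
    (hnl : ∀ j', k ≤ j' → ¬ Leaks (Gseg G i j') (G j')) :
    ∀ j, k ≤ j → ∀ z t, (z, t) ∈ Gseg G k j →
      (∃ q ∈ T i, (q, t) ∈ Gseg G i j) → ∃ q ∈ T i, (q, z) ∈ Gseg G i k := by
  refine Nat.le_induction ?_ ?_
  · intro z t hzt hq; rw [Gseg_self hzt]; exact hq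
  · rintro j hkj IH z t hzt ⟨q, hqT, hqt⟩
    obtain ⟨w, hw1, hw2⟩ := Gseg_unsnoc hkj hzt
    obtain ⟨u, hu1, hu2⟩ := Gseg_unsnoc (hik.trans hkj) hqt
    have hqw : (q, w) ∈ Gseg G i j := by
      by_contra hqw
      exact hnl j hkj ⟨q, w, t, ⟨u, hu1, hu2⟩, hw2, hqw⟩
    exact IH z w hw1 ⟨q, hqT, hqw⟩

def FreshAt (G : ℕ → Set (Q × Q)) (T : ℕ → Set Q) (j : ℕ) : Prop :=
  ∃ x y, (j, x, y) ∈ Entries G T ∧ ∀ i ≤ j, ∀ q ∈ T i, (q, y) ∉ Gseg G i (j + 1)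

lemma origin (P : GraphPlay Q) {T : ℕ → Set Q} (hT : IsAccumulator P.S P.G T) :
    ∀ j, ∀ t ∈ T j, ∃ i, i ≤ j ∧ (i = 0 ∨ ∃ j', i = j' + 1 ∧ FreshAt P.G T j') ∧
      ∃ q ∈ T i, (q, t) ∈ Gseg P.G i j := by
  intro j
  induction j with
  | zero => exact fun t ht => ⟨0, le_rfl, Or.inl rfl, t, ht, Gseg_refl _ _ _⟩
  | succ j IH =>
    intro t ht
    by_cases h : ∃ z ∈ T j, (z, t) ∈ P.G j
    · obtain ⟨z, hz, hzt⟩ := h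
      obtain ⟨i, hij, hcase, q, hq, hqz⟩ := IH z hz
      exact ⟨i, hij.trans (Nat.le_succ j), hcase, q, hq, Gseg_snoc hij hqz hzt⟩
    · have htS : t ∈ im (P.G j) := by rw [P.him j]; exact hT.1 _ ht
      obtain ⟨x, hx⟩ := htS
      have hxT : x ∉ T j := fun hxT => h ⟨x, hxT, hx⟩
      have hfr : ∀ i ≤ j, ∀ q ∈ T i, (q, t) ∉ Gseg P.G i (j + 1) := by
        intro i hij q hq hqt
        obtain ⟨w, hw1, hw2⟩ := Gseg_unsnoc hij hqt
        exact h ⟨w, acc_closed hT hq j hij w hw1, hw2⟩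
      exact ⟨j + 1, le_rfl, Or.inr ⟨j, rfl, x, t, ⟨hx, hxT, ht⟩, hfr⟩, t, ht, Gseg_refl _ _ _⟩

end Aux

/-- A support-arena play has infinite capacity iff some index leaks infinitely often. -/
theorem stmt6 [Fintype Q] (P : GraphPlay Q) :
    InfiniteCapacity P ↔ ∃ i, LeaksInfOften P.G i := by
  constructor
  · rintro ⟨T, hT, hEnt⟩
    by_contra hno
    push_neg at hno
    have hfin : ∀ i, {j | Leaks (Gseg P.G i j) (P.G j)}.Finite := by
      intro i
      have := hno i
      rw [LeaksInfOften, Set.not_infinite] at this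
      exact this
    have hNex : ∀ i : ℕ, ∃ N, ∀ j, N ≤ j → ¬ Leaks (Gseg P.G i j) (P.G j) := by
      intro i
      obtain ⟨N, hN⟩ := (hfin i).bddAbove
      exact ⟨N + 1, fun j hj hleak => absurd (hN hleak) (by omega)⟩
    choose N hN using hNex
    have hETinf : {j | ∃ x y, (j, x, y) ∈ Entries P.G T}.Infinite := by
      by_contra h
      rw [Set.not_infinite] at h
      refine hEnt ((h.prod (Set.finite_univ (α := Q × Q))).subset ?_)
      exact fun e he => ⟨⟨e.2.1, e.2.2, he⟩, Set.mem_univ _⟩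
    by_cases hFT : {j | FreshAt P.G T j}.Infinite
    · -- infinitely many fresh entries: pigeonhole on disjoint descendant sets
      set n := Fintype.card Q with hn
      have next : ∀ b : ℕ, ∃ j, FreshAt P.G T j ∧ b < j := by
        intro b
        obtain ⟨j, hj, hb⟩ := hFT.exists_notMem_finite (Set.finite_Iic b)
        exact ⟨j, hj, by simpa [Set.mem_Iic] using hb⟩
      choose nx hnx1 hnx2 using next
      let js : ℕ → ℕ := fun m => Nat.rec (nx 0) (fun _ prev => nx (max prev (N (prev + 1)))) m
      have hjsFT : ∀ m, FreshAt P.G T (js m) := by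
        intro m
        cases m with
        | zero => exact hnx1 0
        | succ m => exact hnx1 _
      have hjslt : ∀ m, js m < js (m + 1) := fun m =>
        lt_of_le_of_lt (le_max_left _ _) (hnx2 _)
      have hjsN : ∀ m, N (js m + 1) < js (m + 1) := fun m =>
        lt_of_le_of_lt (le_max_right _ _) (hnx2 _)
      have hjsmono : StrictMono js := strictMono_nat_of_lt_succ hjslt
      choose xs ys hent hfresh using hjsFT
      have hdesc : ∀ m : Fin (n + 1), ∃ t : Q, t ∈ P.S (js n + 1) ∧
          (ys m.1, t) ∈ Gseg P.G (js m.1 + 1) (js n + 1) := by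
        intro m
        have h1 : ys m.1 ∈ P.S (js m.1 + 1) := hT.1 _ (hent m.1).2.2
        have h2 : js m.1 ≤ js n := hjsmono.monotone (Nat.lt_succ_iff.mp m.2)
        exact exists_descendant P h1 (js n + 1) (by omega)
      choose d hd1 hd2 using hdesc
      have key : ∀ m m' : Fin (n + 1), m.1 < m'.1 → d m ≠ d m' := by
        intro m m' hlt heq
        have hjslt' : js m.1 < js m'.1 := hjsmono hlt
        have hNlt : N (js m.1 + 1) < js m'.1 :=
          lt_of_lt_of_le (hjsN m.1) (hjsmono.monotone hlt)
        have hnl : ∀ j', js m'.1 + 1 ≤ j' → ¬ Leaks (Gseg P.G (js m.1 + 1) j') (P.G j') :=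
          fun j' hj' => hN _ j' (by omega)
        have hm'n : js m'.1 ≤ js n := hjsmono.monotone (Nat.lt_succ_iff.mp m'.2)
        obtain ⟨q, hq, hq2⟩ := ancestor_pullback (G := P.G) (T := T)
          (by omega : js m.1 + 1 ≤ js m'.1 + 1) hnl (js n + 1) (by omega)
          (ys m'.1) (d m') (hd2 m') ⟨ys m.1, (hent m.1).2.2, heq ▸ hd2 m⟩
        exact hfresh m'.1 (js m.1 + 1) (by omega) q hq hq2
      have hinj : Function.Injective d := by
        intro m m' heq
        by_contra hne
        have hne' : m.1 ≠ m'.1 := fun h => hne (Fin.ext h)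
        rcases Nat.lt_or_ge m.1 m'.1 with h | h
        · exact key m m' h heq
        · exact key m' m (by omega) heq.symm
      have hcard := Fintype.card_le_of_injective d hinj
      rw [Fintype.card_fin] at hcard
      omega
    · -- finitely many fresh entries: pigeonhole on finitely many origins
      rw [Set.not_infinite] at hFT
      have hIfin : (insert 0 ((fun j => j + 1) '' {j | FreshAt P.G T j}) : Set ℕ).Finite :=
        (hFT.image _).insert 0
      have hsub : {j | ∃ x y, (j, x, y) ∈ Entries P.G T} \ {j | FreshAt P.G T j} ⊆
          ⋃ i ∈ (insert 0 ((fun j => j + 1) '' {j | FreshAt P.G T j}) : Set ℕ),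
            {j | Leaks (Gseg P.G i j) (P.G j)} := by
        rintro j ⟨⟨x, y, hxy⟩, hjFT⟩
        obtain ⟨i, hij, hcase, q, hq, hqy⟩ := origin P hT (j + 1) y hxy.2.2
        have hij' : i ≤ j := by
          rcases Nat.lt_or_ge i (j + 1) with h | h
          · omega
          · exfalso
            have hieq : i = j + 1 := by omega
            rcases hcase with h0 | ⟨j', hj', hfr⟩
            · omega
            · have : j' = j := by omega
              exact hjFT (this ▸ hfr)
        have hleak := leak_of_rooted_entry hT hij' hxy hq hqy
        refine Set.mem_biUnion ?_ hleak
        rcases hcase with h0 | ⟨j', hj', hfr⟩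
        · rw [h0]; exact Set.mem_insert _ _
        · rw [hj']; exact Set.mem_insert_iff.mpr (Or.inr ⟨j', hfr, rfl⟩)
      exact (hETinf.diff hFT) ((hIfin.biUnion (fun i _ => hfin i)).subset hsub)
  · rintro ⟨i, hi⟩
    have hL : ({j | Leaks (Gseg P.G i j) (P.G j)} \ Set.Iio i).Infinite :=
      hi.diff (Set.finite_Iio i)
    set L := {j | Leaks (Gseg P.G i j) (P.G j)} \ Set.Iio i with hLdef
    obtain ⟨j₀, hj₀⟩ := hL.nonempty
    have hQ : Nonempty Q := by
      obtain ⟨q, _, _, _⟩ := hj₀.1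
      exact ⟨q⟩
    have hwit : ∀ j : ℕ, ∃ w : Q × Q × Q, j ∈ L →
        ((w.1, w.2.2) ∈ relComp (Gseg P.G i j) (P.G j) ∧ (w.2.1, w.2.2) ∈ P.G j ∧
          (w.1, w.2.1) ∉ Gseg P.G i j) := by
      intro j
      by_cases hj : j ∈ L
      · obtain ⟨q, x, y, h1, h2, h3⟩ := hj.1
        exact ⟨(q, x, y), fun _ => ⟨h1, h2, h3⟩⟩
      · exact ⟨⟨hQ.some, hQ.some, hQ.some⟩, fun h => absurd h hj⟩
    choose w hw using hwit
    have hfib : ∃ q : Q, {j | j ∈ L ∧ (w j).1 = q}.Infinite := by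
      by_contra h
      push_neg at h
      have hsub : L ⊆ ⋃ q : Q, {j | j ∈ L ∧ (w j).1 = q} :=
        fun j hj => Set.mem_iUnion.mpr ⟨(w j).1, hj, rfl⟩
      exact hL ((Set.finite_iUnion h).subset hsub)
    obtain ⟨q, hLq⟩ := hfib
    obtain ⟨j₁, hj₁L, hj₁q⟩ := hLq.nonempty
    have hmemL : ∀ {j}, j ∈ L → i ≤ j := by
      intro j hj
      have := hj.2
      simpa [Set.mem_Iio, Nat.not_lt] using this
    have hqS : q ∈ P.S i := by
      obtain ⟨h1, h2, h3⟩ := hw j₁ hj₁L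
      obtain ⟨z, hz1, hz2⟩ := h1
      rw [← P.hdom i, ← hj₁q]
      exact Gseg_fst_mem_dom (hmemL hj₁L) hz1 hz2
    classical
    refine ⟨fun m => if i ≤ m then {t | (q, t) ∈ Gseg P.G i m} else ∅, ⟨?_, ?_⟩, ?_⟩
    · intro m
      show (if i ≤ m then {t | (q, t) ∈ Gseg P.G i m} else ∅) ⊆ P.S m
      by_cases him : i ≤ m
      · rw [if_pos him]
        intro t ht
        rcases Nat.eq_or_lt_of_le him with heq | hlt
        · subst heq
          rwa [← Gseg_self ht]
        · obtain ⟨m', rfl⟩ : ∃ m', m = m' + 1 := ⟨m - 1, by omega⟩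
          have : t ∈ im (P.G m') := Gseg_snd_mem_im (by omega) ht
          rwa [P.him m'] at this
      · rw [if_neg him]
        exact fun t ht => absurd ht (Set.notMem_empty t)
    · intro m s t hs hst
      have hs' : s ∈ (if i ≤ m then {t | (q, t) ∈ Gseg P.G i m} else ∅) := hs
      show t ∈ (if i ≤ m + 1 then {t | (q, t) ∈ Gseg P.G i (m + 1)} else ∅)
      by_cases him : i ≤ m
      · rw [if_pos him] at hs'
        rw [if_pos (by omega)]
        exact Gseg_snoc him hs' hst
      · rw [if_neg him] at hs'
        exact absurd hs' (Set.notMem_empty s)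
    · have hsub : (fun j => (j, (w j).2.1, (w j).2.2)) '' {j | j ∈ L ∧ (w j).1 = q} ⊆
          Entries P.G (fun m => if i ≤ m then {t | (q, t) ∈ Gseg P.G i m} else ∅) := by
        rintro e ⟨j, ⟨hjL, hjq⟩, rfl⟩
        obtain ⟨h1, h2, h3⟩ := hw j hjL
        have hij : i ≤ j := hmemL hjL
        refine ⟨h2, ?_, ?_⟩
        · show (w j).2.1 ∉ (if i ≤ j then {t | (q, t) ∈ Gseg P.G i j} else ∅)
          rw [if_pos hij]
          intro hmem
          exact h3 (by rw [hjq]; exact hmem)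
        · show (w j).2.2 ∈ (if i ≤ j + 1 then {t | (q, t) ∈ Gseg P.G i (j + 1)} else ∅)
          rw [if_pos (by omega)]
          show (q, (w j).2.2) ∈ Gseg P.G i (j + 1)
          exact relComp_Gseg hij (by rw [← hjq]; exact h1)
      have hinj : Set.InjOn (fun j => (j, (w j).2.1, (w j).2.2)) {j | j ∈ L ∧ (w j).1 = q} :=
        fun a _ b _ h => congrArg Prod.fst h
      exact Set.Infinite.mono hsub (hLq.image hinj)
end

section
/- Let i < n be indices of a support-arena play. If G[i,n] separates a pair (r,t) ∈ R_n, then there exists m ≥ n such that G[i,m] leaks at G_{m+1}. -/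
variable {Q : Type}

lemma Gseg_comp {G : ℕ → Set (Q × Q)} {i n j : ℕ} (h1 : i ≤ n) (h2 : n ≤ j) {a b c : Q}
    (hab : (a, b) ∈ Gseg G i n) (hbc : (b, c) ∈ Gseg G n j) : (a, c) ∈ Gseg G i j := by
  obtain ⟨p1, hp1i, hp1n, hp1⟩ := hab
  obtain ⟨p2, hp2n, hp2j, hp2⟩ := hbc
  refine ⟨fun k => if k < n then p1 k else p2 k, ?_, ?_, ?_⟩
  · rcases eq_or_lt_of_le h1 with h | h
    · subst h
      simp only [lt_irrefl, if_neg]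
      rw [hp2n]; exact hp1n.symm.trans hp1i
    · simp only [if_pos h]; exact hp1i
  · have : ¬ j < n := by omega
    simp only [if_neg this]; exact hp2j
  · intro k hik hkj
    by_cases hk : k < n
    · by_cases hk1 : k + 1 < n
      · simp only [if_pos hk, if_pos hk1]; exact hp1 k hik hk
      · have hkn : k + 1 = n := by omega
        simp only [if_pos hk, if_neg hk1]
        have he : p2 (k + 1) = p1 (k + 1) := by
          rw [hkn, hp2n]; exact hp1n.symm
        rw [he]; exact hp1 k hik hk
    · have : ¬ k + 1 < n := by omega
      simp only [if_neg hk, if_neg this]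
      exact hp2 k (by omega) hkj

lemma Gseg_decomp {G : ℕ → Set (Q × Q)} {i m : ℕ} (h : i ≤ m) {a c : Q}
    (h2 : (a, c) ∈ Gseg G i (m + 1)) : (a, c) ∈ relComp (Gseg G i m) (G m) := by
  obtain ⟨p, hpi, hpj, hp⟩ := h2
  exact ⟨p m, ⟨p, hpi, rfl, fun k hik hkm => hp k hik (by omega)⟩,
    by rw [show c = p (m + 1) from hpj.symm]; exact hp m h (by omega)⟩

/-- If G[i,n] separates a pair (r,t) ∈ R_n, then G[i,m] leaks at G_{m+1} for some m ≥ n. -/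
theorem stmt7 (P : GraphPlay Q) (i n : ℕ) (hin : i < n) (r t : Q)
    (hR : Rrel P.G n r t) (hsep : Separates (Gseg P.G i n) r t) :
    ∃ m, n ≤ m ∧ Leaks (Gseg P.G i m) (P.G m) := by
  obtain ⟨j, hnj, y, hry, hty⟩ := hR
  obtain ⟨q, hqr, hqt⟩ := hsep
  obtain ⟨pt, hptn, hptj, hpt⟩ := hty
  have hptn' : pt n = t := hptn
  have hptj' : pt j = y := hptj
  have hqy : (q, y) ∈ Gseg P.G i j := Gseg_comp hin.le hnj hqr hry
  have hex : ∃ k, n ≤ k ∧ k ≤ j ∧ (q, pt k) ∈ Gseg P.G i k :=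
    ⟨j, hnj, le_refl j, by rw [hptj']; exact hqy⟩
  classical
  obtain ⟨hk1, hk2, hk3⟩ := Nat.find_spec hex
  have hmin : ∀ m', m' < Nat.find hex → ¬ (n ≤ m' ∧ m' ≤ j ∧ (q, pt m') ∈ Gseg P.G i m') :=
    fun m' h => Nat.find_min hex h
  have hkn : n < Nat.find hex := by
    rcases lt_or_eq_of_le hk1 with h | h
    · exact h
    · rw [← h, hptn'] at hk3; exact absurd hk3 hqt
  obtain ⟨m, hm⟩ : ∃ m, Nat.find hex = m + 1 := ⟨Nat.find hex - 1, by omega⟩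
  rw [hm] at hk1 hk2 hk3 hkn hmin
  refine ⟨m, by omega, q, pt m, pt (m + 1), Gseg_decomp (by omega) hk3,
    hpt m (by omega) (by omega), fun hc => hmin m (by omega) ⟨by omega, by omega, hc⟩⟩
end

section
/- Let i be an index of a support-arena play. If there are only finitely many indices j such that G[i,j] leaks at G_{j+1} (i.e., i does not leak infinitely often), then there are only finitely many indices j such that G[i,j] separates some pair (r,t) ∈ R_j. -/
variable {Q : Type}

/-- Discrete intermediate value: between a failure and a success of P there is a switch. -/
lemma ivt' {P : ℕ → Prop} : ∀ b a, a ≤ b → ¬ P a → P b →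
    ∃ m, a ≤ m ∧ m < b ∧ ¬ P m ∧ P (m + 1) := by
  intro b
  induction b with
  | zero =>
    intro a ha hpa hpb
    interval_cases a
    exact absurd hpb hpa
  | succ b ih =>
    intro a ha hpa hpb
    rcases Nat.lt_or_ge a (b + 1) with h | h
    · have hab : a ≤ b := Nat.lt_succ_iff.mp h
      by_cases hPb : P b
      · obtain ⟨m, h1, h2, h3, h4⟩ := ih a hab hpa hPb
        exact ⟨m, h1, h2.trans (Nat.lt_succ_self b), h3, h4⟩
      · exact ⟨b, hab, Nat.lt_succ_self b, hPb, hpb⟩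
    · have : a = b + 1 := le_antisymm ha h
      subst this
      exact absurd hpb hpa

/-- Composition of segments. -/
lemma Gseg_comp_s8 {G : ℕ → Set (Q × Q)} {i j k : ℕ} {q r y : Q}
    (hij : i ≤ j) (hjk : j ≤ k)
    (h1 : (q, r) ∈ Gseg G i j) (h2 : (r, y) ∈ Gseg G j k) :
    (q, y) ∈ Gseg G i k := by
  obtain ⟨p1, hp1i, hp1j, hp1⟩ := h1
  obtain ⟨p2, hp2j, hp2k, hp2⟩ := h2
  refine ⟨fun n => if n < j then p1 n else p2 n, ?_, ?_, ?_⟩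
  · simp only
    rcases lt_or_eq_of_le hij with h | h
    · simp [h, hp1i]
    · subst h
      have hqr : q = r := hp1i.symm.trans hp1j
      simp [hp2j, hqr]
  · simp only
    rw [if_neg (by omega), hp2k]
  · intro k' h1' h2'
    simp only
    by_cases h : k' < j
    · by_cases h' : k' + 1 < j
      · rw [if_pos h, if_pos h']
        exact hp1 k' h1' h
      · have hkj : k' + 1 = j := by omega
        rw [if_pos h, if_neg h']
        have he : p2 (k' + 1) = p1 (k' + 1) := by
          rw [hkj]; exact hp2j.trans hp1j.symm
        rw [he]
        exact hp1 k' h1' h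
    · rw [if_neg h, if_neg (by omega)]
      exact hp2 k' (by omega) h2'

/-- Decomposition of a segment at the last step. -/
lemma Gseg_decomp_s8 {G : ℕ → Set (Q × Q)} {i m : ℕ} {q y : Q}
    (him : i ≤ m) (h : (q, y) ∈ Gseg G i (m + 1)) :
    ∃ z, (q, z) ∈ Gseg G i m ∧ (z, y) ∈ G m := by
  obtain ⟨p, hpi, hpm, hp⟩ := h
  refine ⟨p m, ⟨p, hpi, rfl, fun k h1 h2 => hp k h1 (h2.trans (Nat.lt_succ_self m))⟩, ?_⟩
  have := hp m him (Nat.lt_succ_self m)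
  rwa [hpm] at this

/-- If index i does not leak infinitely often, then there are only finitely many j such
that G[i,j] separates some pair of R_j. -/
theorem stmt8 [Fintype Q] (P : GraphPlay Q) (i : ℕ)
    (hfin : {j | Leaks (Gseg P.G i j) (P.G j)}.Finite) :
    {j | ∃ r t : Q, Rrel P.G j r t ∧ Separates (Gseg P.G i j) r t}.Finite := by
  obtain ⟨N, hN⟩ : BddAbove {j | Leaks (Gseg P.G i j) (P.G j)} := hfin.bddAbove
  apply (Set.finite_Iic N).subset
  intro j hj
  obtain ⟨r, t, ⟨k, hjk, y, hry, hty⟩, q, hqr, hqt⟩ := hj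
  have hij : i ≤ j := by
    by_contra h
    push_neg at h
    exact hqt ⟨fun n => if n = i then q else t, by simp,
      by simp [show j ≠ i by omega], fun k' h1 h2 => absurd (h1.trans_lt h2) (by omega)⟩
  obtain ⟨pt, hpti, hptk, hpt⟩ := hty
  have hPk : (q, pt k) ∈ Gseg P.G i k := by
    rw [hptk]
    exact Gseg_comp_s8 hij hjk hqr hry
  have hPj : (q, pt j) ∉ Gseg P.G i j := by
    rw [hpti]
    exact hqt
  obtain ⟨m, hm1, hm2, hm3, hm4⟩ :=
    ivt' (P := fun m => (q, pt m) ∈ Gseg P.G i m) k j hjk hPj hPk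
  obtain ⟨z, hz1, hz2⟩ := Gseg_decomp_s8 (hij.trans hm1) hm4
  have hmem : m ∈ {j | Leaks (Gseg P.G i j) (P.G j)} :=
    ⟨q, pt m, pt (m + 1), ⟨z, hz1, hz2⟩, hpt m hm1 hm2, hm3⟩
  exact hm1.trans (hN hmem)
end

section
/- Let i be an index of a support-arena play. If G[i,j] leaks at G_{j+1} for infinitely many j (i leaks infinitely often), then for every j > i, the graph G[i,j] separates some pair (r,t) ∈ R_j. -/
variable {Q : Type}

lemma gseg_refl (G : ℕ → Set (Q × Q)) (j : ℕ) (x : Q) : (x, x) ∈ Gseg G j j :=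
  ⟨fun _ => x, rfl, rfl, fun k hk hk' => absurd (hk.trans_lt hk') (lt_irrefl _)⟩

lemma gseg_single (G : ℕ → Set (Q × Q)) {k : ℕ} {a b : Q} (h : (a, b) ∈ G k) :
    (a, b) ∈ Gseg G k (k + 1) := by
  refine ⟨fun n => if n = k then a else b, by simp, by simp, fun m hm hm' => ?_⟩
  have : m = k := by omega
  subst this
  simpa using h

lemma gseg_comp (G : ℕ → Set (Q × Q)) {i j k : ℕ} {a b c : Q}
    (hij : i ≤ j) (hjk : j ≤ k)
    (h1 : (a, b) ∈ Gseg G i j) (h2 : (b, c) ∈ Gseg G j k) :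
    (a, c) ∈ Gseg G i k := by
  obtain ⟨p, hpi, hpj, hpe⟩ := h1
  obtain ⟨q, hqj, hqk, hqe⟩ := h2
  dsimp only at hpi hpj hqj hqk
  refine ⟨fun n => if n < j then p n else q n, ?_, ?_, ?_⟩
  · by_cases h : i < j
    · simpa [h] using hpi
    · have : i = j := by omega
      subst this
      simp only [lt_irrefl, if_false]
      rw [hqj, ← hpj, hpi]
  · simp only [show ¬ k < j by omega, if_false]; exact hqk
  · intro m hm hm'
    by_cases h : m < j
    · by_cases h2 : m + 1 < j
      · simpa [h, h2] using hpe m hm h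
      · have heq : m + 1 = j := by omega
        have hq : q (m + 1) = p (m + 1) := by rw [heq, hqj, ← hpj]
        simp only [h, if_true, h2, if_false, hq]
        exact hpe m hm h
    · have h2 : ¬ m + 1 < j := by omega
      simp only [h, h2, if_false]
      exact hqe m (by omega) hm'

lemma gseg_split (G : ℕ → Set (Q × Q)) {i j k : ℕ} {a c : Q}
    (hij : i ≤ j) (hjk : j ≤ k) (h : (a, c) ∈ Gseg G i k) :
    ∃ b, (a, b) ∈ Gseg G i j ∧ (b, c) ∈ Gseg G j k := by
  obtain ⟨p, hpi, hpk, hpe⟩ := h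
  exact ⟨p j, ⟨p, hpi, rfl, fun m hm hm' => hpe m hm (by omega)⟩,
    ⟨p, rfl, hpk, fun m hm hm' => hpe m (by omega) hm'⟩⟩

lemma back_path (P : GraphPlay Q) {j k : ℕ} (hjk : j ≤ k) {x : Q} (hx : x ∈ P.S k) :
    ∃ t, (t, x) ∈ Gseg P.G j k := by
  induction k, hjk using Nat.le_induction generalizing x with
  | base => exact ⟨x, gseg_refl _ _ _⟩
  | succ k hk ih =>
    have hx' : x ∈ im (P.G k) := by rw [P.him]; exact hx
    obtain ⟨x', hx'x⟩ := hx'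
    have hx'S : x' ∈ P.S k := by rw [← P.hdom]; exact ⟨x, hx'x⟩
    obtain ⟨t, ht⟩ := ih hx'S
    exact ⟨t, gseg_comp P.G hk (by omega) ht (gseg_single P.G hx'x)⟩

/-- If index i leaks infinitely often, then for every j > i, G[i,j] separates
some pair (r,t) ∈ R_j. -/
theorem stmt9 [Fintype Q] (P : GraphPlay Q) (i : ℕ) (hio : LeaksInfOften P.G i) :
    ∀ j, i < j → ∃ r t : Q, Rrel P.G j r t ∧ Separates (Gseg P.G i j) r t := by
  intro j hij
  obtain ⟨k, hk, hjk⟩ := hio.exists_gt j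
  obtain ⟨q, x, y, ⟨z, hqz, hzy⟩, hxy, hqx⟩ := hk
  have hjk' : j ≤ k := hjk.le
  obtain ⟨r, hqr, hrz⟩ := gseg_split P.G hij.le hjk' hqz
  have hxS : x ∈ P.S k := by rw [← P.hdom]; exact ⟨y, hxy⟩
  obtain ⟨t, htx⟩ := back_path P hjk' hxS
  refine ⟨r, t, ⟨k + 1, by omega, y, ?_, ?_⟩, q, hqr, ?_⟩
  · exact gseg_comp P.G hjk' (by omega) hrz (gseg_single P.G hzy)
  · exact gseg_comp P.G hjk' (by omega) htx (gseg_single P.G hxy)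
  · intro hqt
    exact hqx (gseg_comp P.G hij.le hjk' hqt htx)
end

section
/- If an index i leaks infinitely often in a support-arena play, then every index k ≥ i also leaks infinitely often; more precisely, for every j > i at which G[i,j] leaks at G_{j+1} and every k with i ≤ k ≤ j, the graph G[k,j] leaks at G_{j+1}. -/
variable {Q : Type}

theorem stmt10_aux (P : GraphPlay Q) (i : ℕ) :
    ∀ j, i < j → Leaks (Gseg P.G i j) (P.G j) →
      ∀ k, i ≤ k → k ≤ j → Leaks (Gseg P.G k j) (P.G j) := by
  intro j hij hleak k hik hkj
  obtain ⟨q, x, y, ⟨z, ⟨path, hpi, hpj, hstep⟩, hzy⟩, hxy, hqx⟩ := hleak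
  refine ⟨path k, x, y,
    ⟨z, ⟨path, rfl, hpj, fun n hn1 hn2 => hstep n (le_trans hik hn1) hn2⟩, hzy⟩, hxy, ?_⟩
  rintro ⟨path', hp'k, hp'j, hstep'⟩
  apply hqx
  refine ⟨fun n => if n < k then path n else path' n, ?_, ?_, ?_⟩
  · by_cases h : i < k
    · simpa [h] using hpi
    · have hik' : i = k := le_antisymm hik (not_lt.1 h)
      simp only [h, if_false]
      rw [hik'] at hpi ⊢
      rw [hp'k]; exact hpi
  · have : ¬ j < k := not_lt.2 hkj
    simpa [this] using hp'j
  · intro n hn1 hn2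
    by_cases h : n < k
    · by_cases h2 : n + 1 < k
      · simpa [h, h2] using hstep n hn1 (lt_of_lt_of_le h hkj)
      · have hk : n + 1 = k := by omega
        simp only [h, if_true, h2, if_false]
        rw [hk, hp'k, ← hk]
        exact hstep n hn1 (lt_of_lt_of_le h hkj)
    · have h2 : ¬ n + 1 < k := by omega
      simp only [h, if_false, h2]
      exact hstep' n (not_lt.1 h) hn2


/-- If i leaks infinitely often, so does every k ≥ i; more precisely any leak of
G[i,j] at G_{j+1} is also a leak of G[k,j] at G_{j+1}, for i ≤ k ≤ j. -/
theorem stmt10 (P : GraphPlay Q) (i : ℕ) :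
    (∀ j, i < j → Leaks (Gseg P.G i j) (P.G j) →
      ∀ k, i ≤ k → k ≤ j → Leaks (Gseg P.G k j) (P.G j)) ∧
    (LeaksInfOften P.G i → ∀ k, i ≤ k → LeaksInfOften P.G k) := by
  refine ⟨stmt10_aux P i, ?_⟩
  intro h k hik
  have hfin : (Set.Iic (max i k)).Finite := Set.finite_Iic _
  apply Set.Infinite.mono (s := {j | Leaks (Gseg P.G i j) (P.G j)} \ Set.Iic (max i k))
  · rintro j ⟨hj, hj2⟩
    simp only [Set.mem_Iic, not_le] at hj2
    exact (stmt10_aux P i) j (lt_of_le_of_lt (le_max_left i k) hj2) hj k hik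
      (le_of_lt (lt_of_le_of_lt (le_max_right i k) hj2))
  · exact h.diff hfin
end
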